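/- arXiv:1911.05457 — 12 statements merged into one kernel-verified Lean document; each statement's English description precedes it below -/
import Mathlib

section
/- If (X,·) is a finite cycle set with abelian permutation group G(X) acting transitively on X, and |X|>1, then the retraction σ(X) has strictly smaller cardinality than X (i.e., X is retractable). -/
/-- A cycle set: a set with bijective left multiplications `σ x`
satisfying `(x·y)·(x·z) = (y·x)·(y·z)`. -/
structure CycleSet (X : Type*) where
  σ : X → Equiv.Perm X
  cycl : ∀ x y z : X, σ (σ x y) (σ x z) = σ (σ y x) (σ y z)

namespace CycleSet

variable {X Y : Type*}

/-- The permutation group generated by the left multiplications. -/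
def permGroup (S : CycleSet X) : Subgroup (Equiv.Perm X) :=
  Subgroup.closure (Set.range S.σ)

/-- Indecomposability: the permutation group acts transitively. -/
def Transitive (S : CycleSet X) : Prop :=
  ∀ x y : X, ∃ g ∈ S.permGroup, g x = y

/-- The permutation group is abelian. -/
def AbelianPerm (S : CycleSet X) : Prop :=
  ∀ g ∈ S.permGroup, ∀ h ∈ S.permGroup, g * h = h * g

/-- `rel S n x y` holds iff `x` and `y` become equal in the `n`-th iterated
retraction `σ^n(X)`. -/
def rel (S : CycleSet X) : ℕ → X → X → Prop
  | 0 => Eq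
  | n + 1 => fun x y => ∀ z, S.rel n (S.σ x z) (S.σ y z)

/-- The cardinality `|σ^n(X)|` of the `n`-th iterated retraction. -/
noncomputable def retCard (S : CycleSet X) (n : ℕ) : ℕ :=
  Nat.card (Quot (S.rel n))

/-- `X` is multipermutational of level `m`: `m` is minimal with `|σ^m(X)| = 1`. -/
def MultipermLevel (S : CycleSet X) (m : ℕ) : Prop :=
  (∀ x y, S.rel m x y) ∧ ∀ k < m, ¬ (∀ x y, S.rel k x y)

/-- Isomorphism of cycle sets. -/
def Isomorphic (S : CycleSet X) (T : CycleSet Y) : Prop :=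
  ∃ F : X → Y, Function.Bijective F ∧ ∀ x y, F (S.σ x y) = T.σ (F x) (F y)

end CycleSet


lemma CycleSet.sigma_mem {X : Type*} (S : CycleSet X) (x : X) : S.σ x ∈ S.permGroup :=
  Subgroup.subset_closure ⟨x, rfl⟩

lemma CycleSet.not_inj {X : Type*} [Finite X] (S : CycleSet X)
    (hab : S.AbelianPerm) (htr : S.Transitive) (hX : 1 < Nat.card X) :
    ¬ Function.Injective S.σ := by
  intro hinj
  have hnt : Nontrivial X := Finite.one_lt_card_iff_nontrivial.1 hX
  obtain ⟨x0⟩ : Nonempty X := inferInstance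
  -- the orbit map is injective (freeness of the abelian transitive action)
  have hfree : ∀ g ∈ S.permGroup, g x0 = x0 → g = 1 := by
    intro g hg hfix
    ext y
    obtain ⟨k, hk, hky⟩ := htr x0 y
    have : (g * k) x0 = (k * g) x0 := by rw [hab g hg k hk]
    simpa [Equiv.Perm.mul_apply, hfix, hky] using this
  have hι : Function.Injective (fun g : S.permGroup => (g : Equiv.Perm X) x0) := by
    intro g h hgh
    have hm : (h⁻¹ * g : Equiv.Perm X) ∈ S.permGroup := mul_mem (inv_mem h.2) g.2
    have : ((h⁻¹ * g : Equiv.Perm X)) x0 = x0 := by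
      simp only [Equiv.Perm.mul_apply] at hgh ⊢
      simp [hgh]
    have h1 := hfree _ hm this
    have : (h : Equiv.Perm X)⁻¹ * g = 1 := h1
    have := mul_eq_one_iff_inv_eq.mp this
    exact Subtype.ext (by rw [← this, inv_inv])
  -- σ as a map into the permutation group, injective
  have hs : Function.Injective (fun x : X => (⟨S.σ x, S.sigma_mem x⟩ : S.permGroup)) := by
    intro x y h
    exact hinj (congrArg Subtype.val h)
  have hcard : Nat.card S.permGroup = Nat.card X :=
    le_antisymm (Nat.card_le_card_of_injective _ hι) (Nat.card_le_card_of_injective _ hs)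
  -- hence σ : X → G is surjective; get e with σ e = 1
  have hsurj : Function.Surjective (fun x : X => (⟨S.σ x, S.sigma_mem x⟩ : S.permGroup)) :=
    ((Nat.bijective_iff_injective_and_card _).2 ⟨hs, hcard.symm⟩).2
  obtain ⟨e, he⟩ := hsurj 1
  have he1 : S.σ e = 1 := congrArg Subtype.val he
  -- every σ y fixes e
  have hfixgen : ∀ y : X, S.σ y e = e := by
    intro y
    have key : ∀ z, S.σ (S.σ y e) (S.σ y z) = S.σ y z := by
      intro z
      have := S.cycl e y z
      simpa [he1] using this.symm
    have : S.σ (S.σ y e) = 1 := by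
      ext w
      obtain ⟨z, rfl⟩ := (S.σ y).surjective w
      simpa using key z
    exact hinj (by rw [this, he1])
  -- every element of the permutation group fixes e
  have hfixall : ∀ g ∈ S.permGroup, g e = e := by
    intro g hg
    induction hg using Subgroup.closure_induction with
    | mem g hg => obtain ⟨y, rfl⟩ := hg; exact hfixgen y
    | one => rfl
    | mul g h _ _ hg hh => simp [Equiv.Perm.mul_apply, hg, hh]
    | inv g _ hg => exact (Equiv.symm_apply_eq _).2 hg.symm
  obtain ⟨y, hy⟩ := exists_ne e
  obtain ⟨g, hg, hge⟩ := htr e y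
  exact hy (by rw [← hge, hfixall g hg])

/-- If `X` is a finite cycle set with abelian permutation group acting
transitively, and `|X| > 1`, then `|σ(X)| < |X|`. -/
theorem stmt0 {X : Type*} [Finite X] (S : CycleSet X)
    (hab : S.AbelianPerm) (htr : S.Transitive) (hX : 1 < Nat.card X) :
    S.retCard 1 < Nat.card X := by
  have hni := S.not_inj hab htr hX
  rw [Function.not_injective_iff] at hni
  obtain ⟨x, y, hxy, hne⟩ := hni
  have hq : Function.Surjective (Quot.mk (S.rel 1)) := Quot.mk_surjective
  have hfin : Finite (Quot (S.rel 1)) := Finite.of_surjective _ hq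
  have hle : S.retCard 1 ≤ Nat.card X := Nat.card_le_card_of_surjective _ hq
  rcases hle.lt_or_eq with h | h
  · exact h
  · exfalso
    have hqinj : Function.Injective (Quot.mk (S.rel 1)) :=
      ((Nat.bijective_iff_surjective_and_card _).2 ⟨hq, h.symm ▸ rfl⟩).1
    have : Quot.mk (S.rel 1) x = Quot.mk (S.rel 1) y :=
      Quot.sound (fun z => show S.σ x z = S.σ y z by rw [hxy])
    exact hne (hqinj this)
end

section
/- Every finite indecomposable cycle set with abelian permutation group is multipermutational, i.e., iterated retraction eventually yields a singleton. -/
/-!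
An abelian transitive permutation group acts regularly, so `|G(X)| = |X|`. If `σ` is injective,
it is therefore a bijection `X → G(X)`, and some `z` has `σ z = 1`; the cycle set law then forces
`σ y z = z` for all `y`, so the transitive group fixes `z` and `X = {z}`. Otherwise the retraction
is strictly smaller, and it is again finite, indecomposable and has abelian permutation group, so
induction on `|X|` applies.
-/

open Equiv Function

section PermGroup

variable {X Y : Type*}

theorem Subgroup.injective_apply_of_comm_of_transitive {H : Subgroup (Perm X)}
    (hcomm : ∀ g ∈ H, ∀ h ∈ H, g * h = h * g) (htr : ∀ x y, ∃ g ∈ H, g x = y) (x₀ : X) :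
    Injective fun g : H => (g : Perm X) x₀ := by
  intro g g' hgg'
  refine Subtype.ext (Equiv.ext fun w => ?_)
  obtain ⟨k, hk, rfl⟩ := htr x₀ w
  have hcomm_apply : ∀ u ∈ H, u (k x₀) = k (u x₀) := fun u hu =>
    DFunLike.congr_fun (hcomm u hu k hk) x₀
  simp only at hgg'
  rw [hcomm_apply g g.2, hcomm_apply g' g'.2, hgg']

theorem Subgroup.exists_semiconj_of_mem_closure {s : Set (Perm X)} {K : Subgroup (Perm Y)}
    {f : X → Y} (hs : ∀ a ∈ s, ∃ b ∈ K, Semiconj f a b) {g : Perm X}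
    (hg : g ∈ Subgroup.closure s) : ∃ b ∈ K, Semiconj f g b := by
  induction hg using Subgroup.closure_induction with
  | mem a ha => exact hs a ha
  | one => exact ⟨1, K.one_mem, fun _ => rfl⟩
  | mul a a' _ _ iha iha' =>
    obtain ⟨b, hb, hab⟩ := iha
    obtain ⟨b', hb', hab'⟩ := iha'
    exact ⟨b * b', K.mul_mem hb hb', hab.comp_right hab'⟩
  | inv a _ iha =>
    obtain ⟨b, hb, hab⟩ := iha
    exact ⟨b⁻¹, K.inv_mem hb,
      hab.inverses_right a.apply_symm_apply b.symm_apply_apply⟩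

end PermGroup

namespace CycleSet

variable {X : Type*} (S : CycleSet X)

theorem sigma_mem_permGroup (x : X) : S.σ x ∈ S.permGroup :=
  Subgroup.subset_closure ⟨x, rfl⟩

theorem sigma_sigma_mul_sigma (x y : X) :
    S.σ (S.σ x y) * S.σ x = S.σ (S.σ y x) * S.σ y :=
  Equiv.ext (S.cycl x y)

theorem abelianPerm_of_commute (h : ∀ x y, S.σ x * S.σ y = S.σ y * S.σ x) :
    S.AbelianPerm := by
  have hle := Subgroup.closure_le_centralizer_centralizer (Set.range S.σ)
  intro g hg g' hg'
  refine Set.centralizer_centralizer_comm_of_comm ?_ g (hle hg) g' (hle hg')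
  rintro _ ⟨x, rfl⟩ _ ⟨y, rfl⟩
  exact h x y

theorem sigma_apply_eq_self_of_sigma_eq_one (hinj : Injective S.σ) {z : X}
    (hz : S.σ z = 1) (y : X) : S.σ y z = z := by
  have hyz : S.σ (S.σ y z) = 1 := by
    have h := S.sigma_sigma_mul_sigma z y
    rwa [hz, mul_one, Perm.one_apply, right_eq_mul] at h
  exact hinj (hyz.trans hz.symm)

theorem eq_of_forall_sigma_apply_eq_self (htr : S.Transitive) {z : X}
    (hz : ∀ y, S.σ y z = z) (x : X) : x = z := by
  have hfix : S.permGroup ≤ MulAction.stabilizer (Perm X) z :=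
    (Subgroup.closure_le _).2 fun _ ⟨y, hy⟩ => hy ▸ hz y
  obtain ⟨g, hg, rfl⟩ := htr z x
  exact hfix hg

theorem exists_sigma_eq_one [Finite X] (hab : S.AbelianPerm) (htr : S.Transitive)
    (hinj : Injective S.σ) (x₀ : X) : ∃ z, S.σ z = 1 := by
  let σG : X → S.permGroup := fun x => ⟨S.σ x, S.sigma_mem_permGroup x⟩
  have hcard : Nat.card S.permGroup ≤ Nat.card X :=
    Nat.card_le_card_of_injective _
      (Subgroup.injective_apply_of_comm_of_transitive hab htr x₀)
  have hσG : Bijective σG :=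
    Injective.bijective_of_nat_card_le (fun x y h => hinj (congrArg Subtype.val h)) hcard
  obtain ⟨z, hz⟩ := hσG.2 1
  exact ⟨z, congrArg Subtype.val hz⟩

theorem subsingleton_of_injective [Finite X] (hab : S.AbelianPerm) (htr : S.Transitive)
    (hinj : Injective S.σ) : Subsingleton X := by
  refine ⟨fun x y => ?_⟩
  obtain ⟨z, hz⟩ := S.exists_sigma_eq_one hab htr hinj x
  have hfix := S.sigma_apply_eq_self_of_sigma_eq_one hinj hz
  rw [S.eq_of_forall_sigma_apply_eq_self htr hfix x,
    S.eq_of_forall_sigma_apply_eq_self htr hfix y]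

theorem rel_one_iff {x y : X} : S.rel 1 x y ↔ S.σ x = S.σ y :=
  Equiv.ext_iff.symm

theorem sigma_sigma_eq_of_sigma_eq {x x' y y' : X} (hx : S.σ x = S.σ x')
    (hy : S.σ y = S.σ y') : S.σ (S.σ x y) = S.σ (S.σ x' y') := by
  rw [hx]
  have h := S.sigma_sigma_mul_sigma x' y
  rwa [hy, ← S.sigma_sigma_mul_sigma x' y', mul_left_inj] at h

def retrMul : Quotient (Setoid.ker S.σ) → Quotient (Setoid.ker S.σ) → Quotient (Setoid.ker S.σ) :=
  Quotient.map₂ (fun x y => S.σ x y) fun _ _ hx _ _ hy => S.sigma_sigma_eq_of_sigma_eq hx hy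

theorem retrMul_mk (x y : X) : S.retrMul ⟦x⟧ ⟦y⟧ = ⟦S.σ x y⟧ := rfl

section Retraction

variable [Finite X]

theorem retrMul_bijective (q : Quotient (Setoid.ker S.σ)) :
    Bijective (S.retrMul q) := by
  refine Surjective.bijective_of_finite fun w => ?_
  induction q using Quotient.ind with | _ x => ?_
  induction w using Quotient.ind with | _ w => ?_
  exact ⟨⟦(S.σ x).symm w⟧, by rw [retrMul_mk, apply_symm_apply]⟩

/-- The retraction `σ(X)`, realised as the quotient of `X` by the kernel of `σ`. -/
noncomputable def retr : CycleSet (Quotient (Setoid.ker S.σ)) where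
  σ q := Equiv.ofBijective (S.retrMul q) (S.retrMul_bijective q)
  cycl := by
    rintro ⟨x⟩ ⟨y⟩ ⟨z⟩
    exact congrArg (Quotient.mk _) (S.cycl x y z)

@[simp]
theorem retr_sigma_mk (x y : X) : S.retr.σ ⟦x⟧ ⟦y⟧ = ⟦S.σ x y⟧ := rfl

theorem retr_rel_mk (n : ℕ) (x y : X) : S.retr.rel n ⟦x⟧ ⟦y⟧ ↔ S.rel (n + 1) x y := by
  induction n generalizing x y with
  | zero => exact Quotient.eq.trans S.rel_one_iff.symm
  | succ n ih =>
    refine ⟨fun h z => (ih _ _).1 (h ⟦z⟧), fun h q => ?_⟩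
    induction q using Quotient.ind with | _ z => exact (ih _ _).2 (h z)

theorem retr_abelianPerm (hab : S.AbelianPerm) : S.retr.AbelianPerm := by
  refine S.retr.abelianPerm_of_commute fun p q => ?_
  induction p using Quotient.ind with | _ x => ?_
  induction q using Quotient.ind with | _ y => ?_
  ext r
  induction r using Quotient.ind with | _ z => ?_
  have hxy := hab _ (S.sigma_mem_permGroup x) _ (S.sigma_mem_permGroup y)
  simp only [Perm.mul_apply, retr_sigma_mk]
  exact congrArg (Quotient.mk _) (DFunLike.congr_fun hxy z)

theorem retr_transitive (htr : S.Transitive) : S.retr.Transitive := by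
  intro p q
  induction p using Quotient.ind with | _ x => ?_
  induction q using Quotient.ind with | _ y => ?_
  obtain ⟨g, hg, rfl⟩ := htr x y
  have hgens : ∀ a ∈ Set.range S.σ, ∃ b ∈ S.retr.permGroup, Semiconj (Quotient.mk _) a b := by
    rintro _ ⟨w, rfl⟩
    exact ⟨S.retr.σ ⟦w⟧, S.retr.sigma_mem_permGroup _, fun _ => rfl⟩
  obtain ⟨b, hb, hgb⟩ := Subgroup.exists_semiconj_of_mem_closure hgens hg
  exact ⟨b, hb, (hgb x).symm⟩

theorem card_retr_lt (hinj : ¬ Injective S.σ) :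
    Nat.card (Quotient (Setoid.ker S.σ)) < Nat.card X := by
  refine (Nat.card_le_card_of_surjective _ Quotient.mk_surjective).lt_of_ne fun hcard => ?_
  refine hinj fun x y hxy => ?_
  exact (Quotient.mk_surjective.bijective_of_nat_card_le hcard.ge).1 (Quotient.sound hxy)

end Retraction

end CycleSet

/-- Every finite indecomposable cycle set with abelian permutation group is
multipermutational: some iterated retraction is a singleton. -/
theorem stmt1 {X : Type*} [Finite X] (S : CycleSet X)
    (hab : S.AbelianPerm) (htr : S.Transitive) :
    ∃ m : ℕ, ∀ x y : X, S.rel m x y := by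
  induction hn : Nat.card X using Nat.strong_induction_on generalizing X with
  | _ n ih =>
    by_cases hinj : Function.Injective S.σ
    · have := S.subsingleton_of_injective hab htr hinj
      exact ⟨0, fun x y => Subsingleton.elim x y⟩
    · obtain ⟨m, hm⟩ := ih _ (hn ▸ S.card_retr_lt hinj) S.retr (S.retr_abelianPerm hab)
        (S.retr_transitive htr) rfl
      exact ⟨m + 1, fun x y => (S.retr_rel_mk m x y).1 (hm _ _)⟩
end

section
/- Every finite indecomposable cycle set with abelian permutation group is non-degenerate, i.e., the squaring map x ↦ x·x is bijective. -/
/-- Every finite indecomposable cycle set with abelian permutation group is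
non-degenerate: the squaring map `x ↦ x · x` is bijective. -/
theorem stmt2 {X : Type*} [Finite X] (S : CycleSet X)
    (hab : S.AbelianPerm) (htr : S.Transitive) :
    Function.Bijective (fun x : X => S.σ x x) := by
  classical
  cases isEmpty_or_nonempty X with
  | inl h => exact ⟨fun a b _ => (h.false a).elim, fun a => (h.false a).elim⟩
  | inr hne =>
    letI : Fintype X := Fintype.ofFinite X
    set q : X → X := fun x => S.σ x x with hqdef
    have key : ∀ x z : X, q (S.σ x z) = S.σ (S.σ z x) (q z) := by
      intro x z
      simpa [hqdef] using S.cycl x z z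
    set N : X → ℕ := fun y => (Finset.univ.filter fun x => q x = y).card with hNdef
    -- the counting identity
    have count : ∀ y : X, Fintype.card X * N y = ∑ u : X, N ((S.σ u)⁻¹ y) := by
      intro y
      have hNsum : ∀ y : X, N y = ∑ x : X, if q x = y then 1 else 0 := by
        intro y; rw [hNdef]; exact Finset.card_filter _ _
      calc Fintype.card X * N y
          = ∑ _x : X, N y := by
            rw [Finset.sum_const, smul_eq_mul, Finset.card_univ]
        _ = ∑ x : X, ∑ z : X, if q (S.σ x z) = y then 1 else 0 := by
            refine Finset.sum_congr rfl fun x _ => ?_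
            rw [hNsum y]
            exact (Fintype.sum_equiv (S.σ x)
              (fun z => if q (S.σ x z) = y then 1 else 0)
              (fun w => if q w = y then 1 else 0) (fun z => rfl)).symm
        _ = ∑ z : X, ∑ x : X, if q (S.σ x z) = y then 1 else 0 := Finset.sum_comm
        _ = ∑ z : X, ∑ x : X, if S.σ (S.σ z x) (q z) = y then 1 else 0 := by
            simp only [key]
        _ = ∑ z : X, ∑ u : X, if S.σ u (q z) = y then 1 else 0 := by
            refine Finset.sum_congr rfl fun z _ => ?_
            exact Fintype.sum_equiv (S.σ z)
              (fun x => if S.σ (S.σ z x) (q z) = y then 1 else 0)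
              (fun u => if S.σ u (q z) = y then 1 else 0) (fun x => rfl)
        _ = ∑ u : X, ∑ z : X, if S.σ u (q z) = y then 1 else 0 := Finset.sum_comm
        _ = ∑ u : X, N ((S.σ u)⁻¹ y) := by
            refine Finset.sum_congr rfl fun u _ => ?_
            rw [hNsum]
            refine Finset.sum_congr rfl fun z _ => ?_
            refine if_congr ?_ rfl rfl
            constructor
            · intro h; rw [← h]; simp
            · intro h; rw [h]; simp
    -- choose a maximizer of N
    obtain ⟨y0, -, hy0⟩ := Finset.exists_max_image (Finset.univ : Finset X) N
      ⟨Classical.arbitrary X, Finset.mem_univ _⟩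
    have hmax : ∀ y : X, N y ≤ N y0 := fun y => hy0 y (Finset.mem_univ y)
    -- the maximum set is closed under σ_u⁻¹
    have step : ∀ y : X, N y = N y0 → ∀ u : X, N ((S.σ u)⁻¹ y) = N y0 := by
      intro y hy u
      by_contra hne'
      have hlt : N ((S.σ u)⁻¹ y) < N y0 := lt_of_le_of_ne (hmax _) hne'
      have hstrict : ∑ v : X, N ((S.σ v)⁻¹ y) < ∑ _v : X, N y0 :=
        Finset.sum_lt_sum (fun v _ => hmax _) ⟨u, Finset.mem_univ u, hlt⟩
      rw [← count y, hy, Finset.sum_const, smul_eq_mul, Finset.card_univ] at hstrict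
      exact lt_irrefl _ hstrict
    -- ... and under σ_u, by finiteness
    have stepfwd : ∀ y : X, N y = N y0 → ∀ u : X, N (S.σ u y) = N y0 := by
      intro y hy u
      set Mf : Finset X := Finset.univ.filter (fun z => N z = N y0) with hMf
      have himg : Mf.image (fun z => (S.σ u)⁻¹ z) = Mf := by
        apply Finset.eq_of_subset_of_card_le
        · intro w hw
          obtain ⟨z, hz, rfl⟩ := Finset.mem_image.mp hw
          rw [hMf, Finset.mem_filter] at hz ⊢
          exact ⟨Finset.mem_univ _, step z hz.2 u⟩
        · rw [Finset.card_image_of_injective _ (Equiv.injective _)]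
      have hyM : y ∈ Mf := by
        rw [hMf, Finset.mem_filter]; exact ⟨Finset.mem_univ _, hy⟩
      rw [← himg] at hyM
      obtain ⟨w, hw, hwy⟩ := Finset.mem_image.mp hyM
      have hwq : S.σ u y = w := by rw [← hwy]; simp
      rw [hwq]
      rw [hMf, Finset.mem_filter] at hw
      exact hw.2
    -- closure under the whole permutation group
    have hP : ∀ g : Equiv.Perm X, g ∈ S.permGroup →
        ((∀ y, N y = N y0 → N (g y) = N y0) ∧ (∀ y, N y = N y0 → N (g⁻¹ y) = N y0)) := by
      intro g hg
      refine Subgroup.closure_induction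
        (p := fun g _ => (∀ y, N y = N y0 → N (g y) = N y0) ∧
          (∀ y, N y = N y0 → N (g⁻¹ y) = N y0)) ?_ ?_ ?_ ?_ hg
      · rintro x ⟨u, rfl⟩
        exact ⟨fun y hy => stepfwd y hy u, fun y hy => step y hy u⟩
      · simp
      · rintro a b _ _ ⟨ha1, ha2⟩ ⟨hb1, hb2⟩
        constructor
        · intro y hy
          rw [Equiv.Perm.mul_apply]
          exact ha1 _ (hb1 _ hy)
        · intro y hy
          rw [mul_inv_rev, Equiv.Perm.mul_apply]
          exact hb2 _ (ha2 _ hy)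
      · rintro a _ ⟨ha1, ha2⟩
        refine ⟨ha2, fun y hy => ?_⟩
        rw [inv_inv]
        exact ha1 y hy
    -- N is constant
    have hconst : ∀ y : X, N y = N y0 := by
      intro y
      obtain ⟨g, hg, hgy⟩ := htr y0 y
      rw [← hgy]
      exact (hP g hg).1 y0 rfl
    -- total count
    have hsum : ∑ y : X, N y = Fintype.card X := by
      have h := Finset.card_eq_sum_card_fiberwise
        (f := q) (s := (Finset.univ : Finset X)) (t := (Finset.univ : Finset X))
        (fun x _ => Finset.mem_univ _)
      rw [Finset.card_univ] at h
      rw [hNdef]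
      exact h.symm
    have hNy0 : N y0 = 1 := by
      have h1 : ∑ y : X, N y = Fintype.card X * N y0 := by
        rw [Finset.sum_congr rfl fun y _ => hconst y, Finset.sum_const, smul_eq_mul,
          Finset.card_univ]
      have h2 : Fintype.card X * N y0 = Fintype.card X * 1 := by
        rw [mul_one, ← h1, hsum]
      exact Nat.eq_of_mul_eq_mul_left Fintype.card_pos h2
    have hN1 : ∀ y : X, N y = 1 := fun y => (hconst y).trans hNy0
    constructor
    · intro a b hab'
      have hcard : (Finset.univ.filter fun x => q x = q b).card = 1 := hN1 (q b)
      obtain ⟨c, hc⟩ := Finset.card_eq_one.mp hcard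
      have ha : a ∈ Finset.univ.filter fun x => q x = q b := by
        rw [Finset.mem_filter]; exact ⟨Finset.mem_univ _, hab'⟩
      have hb : b ∈ Finset.univ.filter fun x => q x = q b := by
        rw [Finset.mem_filter]; exact ⟨Finset.mem_univ _, rfl⟩
      rw [hc, Finset.mem_singleton] at ha hb
      rw [ha, hb]
    · intro y
      have hpos : 0 < N y := by
        rw [hN1 y]; exact Nat.one_pos
      obtain ⟨x, hx⟩ := Finset.card_pos.mp hpos
      exact ⟨x, (Finset.mem_filter.mp hx).2⟩
end

section
/- Let X be a finite indecomposable cycle set whose permutation group G(X) is cyclic, generated by α ∈ Sym(X). Then σ_{α^{|σ(X)|}(x)} = σ_x for every x ∈ X, and |σ(X)| is the minimal positive integer n with σ_{α^n(x)} = σ_x. -/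
/-!
The identity `σ_{y·x} = σ_{x·y} σ_x σ_y⁻¹` shows that every element of `G(X)` maps the fibres
of `x ↦ σ_x` to fibres, so `α` induces a permutation `β` of `σ(X) ≅ X / ker σ`, and
`σ_{α^n(x)} = σ_x` for all `x` exactly when `β^n = 1`. As `⟨α⟩` is transitive on `X`, `⟨β⟩` is
transitive on `σ(X)`; an abelian transitive group fixing one point is trivial, so the order of
`β` is the length of its single orbit, `|σ(X)|`.
-/

open Function

theorem Equiv.Perm.pow_eq_one_iff_card_dvd_of_transitive {Q : Type*} [Finite Q] (β : Perm Q)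
    (q₀ : Q) (htr : ∀ q, ∃ k : ℕ, (β ^ k) q₀ = q) (n : ℕ) :
    β ^ n = 1 ↔ Nat.card Q ∣ n := by
  classical
  cases nonempty_fintype Q
  have horbit : ∀ q, q ∈ MulAction.orbit (Subgroup.zpowers β) q₀ := by
    intro q
    obtain ⟨k, rfl⟩ := htr q
    exact ⟨⟨β ^ k, Subgroup.npow_mem_zpowers β k⟩, rfl⟩
  have hcard : Nat.card Q = minimalPeriod (β • ·) q₀ := by
    rw [MulAction.minimalPeriod_eq_card, ← Nat.card_eq_fintype_card,
      Set.eq_univ_of_forall horbit, Nat.card_univ]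
  rw [hcard, ← isPeriodicPt_iff_minimalPeriod_dvd, IsPeriodicPt, IsFixedPt, smul_iterate]
  refine ⟨fun h => by simp [h], fun (h : (β ^ n) q₀ = q₀) => ?_⟩
  ext q
  obtain ⟨k, rfl⟩ := htr q
  rw [← Perm.mul_apply, ← pow_mul_comm, Perm.mul_apply, h, Perm.one_apply]

theorem Setoid.card_quotient_dvd_iff_of_transitive {X : Type*} [Finite X] (r : Setoid X)
    (α : Equiv.Perm X) (hα : ∀ x y, r (α x) (α y) ↔ r x y) (x₀ : X)
    (htr : ∀ x, ∃ k : ℕ, (α ^ k) x₀ = x) (n : ℕ) :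
    (∀ x, r ((α ^ n) x) x) ↔ Nat.card (Quotient r) ∣ n := by
  let β : Equiv.Perm (Quotient r) := Quotient.congr α fun x y => (hα x y).symm
  have hβ : ∀ (k : ℕ) (x : X), (β ^ k) ⟦x⟧ = ⟦(α ^ k) x⟧ := by
    intro k
    induction k with
    | zero => simp
    | succ k ih => intro x; simp [pow_succ', ih, β]
  rw [← β.pow_eq_one_iff_card_dvd_of_transitive ⟦x₀⟧, Equiv.Perm.ext_iff, Quotient.forall]
  · simp only [hβ, Equiv.Perm.one_apply, Quotient.eq]
  · refine Quotient.ind fun x => ?_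
    obtain ⟨k, rfl⟩ := htr x
    exact ⟨k, hβ k x₀⟩

namespace CycleSet

variable {X : Type*} (S : CycleSet X)

theorem σ_σ_apply (x y : X) : S.σ (S.σ y x) = S.σ (S.σ x y) * S.σ x * (S.σ y)⁻¹ := by
  ext w
  simpa using (S.cycl x y ((S.σ y)⁻¹ w)).symm

theorem σ_apply_eq_of_mem_permGroup [Finite X] {g : Equiv.Perm X} (hg : g ∈ S.permGroup)
    {x x' : X} (h : S.σ x = S.σ x') : S.σ (g x) = S.σ (g x') := by
  -- in the finite group `Perm X`, the generated subgroup is the generated submonoid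
  rw [permGroup, ← Subgroup.mem_toSubmonoid, Subgroup.closure_toSubmonoid_of_finite] at hg
  induction hg using Submonoid.closure_induction generalizing x x' with
  | mem _ hs =>
    obtain ⟨y, rfl⟩ := hs
    rw [σ_σ_apply S x y, σ_σ_apply S x' y, h]
  | one => exact h
  | mul a b _ _ ha hb => exact ha (hb h)

theorem σ_apply_eq_iff_of_mem_permGroup [Finite X] {g : Equiv.Perm X} (hg : g ∈ S.permGroup)
    (x x' : X) : S.σ (g x) = S.σ (g x') ↔ S.σ x = S.σ x' := by
  refine ⟨fun h => ?_, S.σ_apply_eq_of_mem_permGroup hg⟩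
  simpa using S.σ_apply_eq_of_mem_permGroup (inv_mem hg) h

theorem retCard_one_eq : S.retCard 1 = Nat.card (Quotient (Setoid.ker S.σ)) :=
  Nat.card_congr <| Quot.congrRight fun x y => (Equiv.ext_iff (f := S.σ x) (g := S.σ y)).symm

end CycleSet

/-- For a finite indecomposable cycle set with cyclic permutation group
generated by `α`, one has `σ_{α^{|σ(X)|}(x)} = σ_x` for every `x`, and
`|σ(X)|` is the minimal positive integer with this property. -/
theorem stmt3 {X : Type*} [Finite X] (S : CycleSet X) (α : Equiv.Perm X)
    (hgen : S.permGroup = Subgroup.zpowers α) (htr : S.Transitive) :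
    (∀ x : X, S.σ ((α ^ S.retCard 1) x) = S.σ x) ∧
      (∀ n : ℕ, 0 < n → (∀ x : X, S.σ ((α ^ n) x) = S.σ x) →
        S.retCard 1 ≤ n) := by
  rcases isEmpty_or_nonempty X with _ | ⟨⟨x₀⟩⟩
  · simp [CycleSet.retCard_one_eq]
  have hα : ∀ x y, S.σ (α x) = S.σ (α y) ↔ S.σ x = S.σ y :=
    S.σ_apply_eq_iff_of_mem_permGroup (hgen ▸ Subgroup.mem_zpowers α)
  have hpowers : ∀ x, ∃ k : ℕ, (α ^ k) x₀ = x := by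
    intro x
    obtain ⟨g, hg, rfl⟩ := htr x₀ x
    rw [hgen, ← mem_powers_iff_mem_zpowers] at hg
    obtain ⟨k, rfl⟩ := hg
    exact ⟨k, rfl⟩
  have hperiod := (Setoid.ker S.σ).card_quotient_dvd_iff_of_transitive α hα x₀ hpowers
  rw [← S.retCard_one_eq] at hperiod
  exact ⟨(hperiod _).2 dvd_rfl, fun n hn h => Nat.le_of_dvd hn ((hperiod n).1 h)⟩
end

section
/- Let X = {0,…,p^k−1} be an indecomposable cycle set with cyclic permutation group generated by the cycle t_1 = (0 1 … p^k−1), with σ_0 = t_1, and write σ_i = t_1^{j_i} for each i. Then every σ_x generates G(X); equivalently, j_i ≡ 1 (mod p) for all i. -/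
open Function

/-- The cycle set law `(x·y)·(x·0) = (y·x)·(y·0)` for `x·y = y + f x`; as translations commute,
it implies the law for every third argument. -/
def IsCycleShift {A : Type*} [AddCommGroup A] (f : A → A) : Prop :=
  ∀ x y, f x + f (y + f x) = f y + f (x + f y)

theorem CycleSet.isCycleShift_of_σ_eq_addRight {A : Type*} [AddCommGroup A] (S : CycleSet A)
    {f : A → A} (hS : ∀ x, S.σ x = Equiv.addRight (f x)) : IsCycleShift f := by
  intro x y
  simpa [hS, add_comm] using S.cycl x y 0

namespace IsCycleShift

section AddCommGroup

variable {A : Type*} [AddCommGroup A] {f : A → A}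

theorem apply_add_nsmul_apply_zero_eq (hf : IsCycleShift f) {a b : A} (hab : f a = f b) (n : ℕ) :
    f (a + n • f 0) = f (b + n • f 0) := by
  induction n with
  | zero => simpa using hab
  | succ n ih =>
    have step : ∀ x, f (x + f 0) = f x + f (f x) - f 0 := fun x => by
      rw [eq_sub_iff_add_eq', ← hf x 0, zero_add]
    rw [succ_nsmul, ← add_assoc, ← add_assoc, step, step, ih]

theorem not_injective [Finite A] [Nontrivial A] (hf : IsCycleShift f) : ¬ Injective f := by
  intro hinj
  obtain ⟨y, hy⟩ := Finite.injective_iff_surjective.mp hinj 0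
  have hzero : ∀ x, f x = 0 := fun x => by
    have h := hf y x
    rw [hy, zero_add, add_zero, left_eq_add, ← hy] at h
    simpa using hinj h
  obtain ⟨a, b, hab⟩ := exists_pair_ne A
  exact hab (hinj ((hzero a).trans (hzero b).symm))

theorem map {B : Type*} [AddCommGroup B] (φ : A →+ B) (hφ : Surjective φ) {g : B → B}
    (hfg : ∀ x, φ (f x) = g (φ x)) (hf : IsCycleShift f) : IsCycleShift g := by
  intro X Y
  obtain ⟨x, rfl⟩ := hφ X
  obtain ⟨y, rfl⟩ := hφ Y
  simp only [← hfg, ← map_add, hf x y]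

end AddCommGroup

theorem periodic_sub {N : ℕ} [NeZero N] {f : ZMod N → ZMod N} (hf : IsCycleShift f)
    (h0 : f 0 = 1) {a b : ZMod N} (hab : f a = f b) : Periodic f (b - a) := by
  intro x
  have h := hf.apply_add_nsmul_apply_zero_eq hab (x - a).val
  rw [h0, nsmul_one, ZMod.natCast_zmod_val, add_sub_cancel] at h
  rw [h]
  congr 1
  abel

end IsCycleShift

theorem ZMod.dvd_prime_pow_of_ne_zero {p k : ℕ} (hp : p.Prime) {d : ZMod (p ^ (k + 1))}
    (hd : d ≠ 0) : d ∣ (p : ZMod (p ^ (k + 1))) ^ k := by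
  have : NeZero (p ^ (k + 1)) := ⟨pow_ne_zero _ hp.ne_zero⟩
  have hv : d.val ≠ 0 := (ZMod.val_ne_zero d).mpr hd
  obtain ⟨i, u, hpu, hdu⟩ := Nat.exists_eq_pow_mul_and_not_dvd hv p hp.ne_one
  have hik : i ≤ k := by
    have : p ^ i < p ^ (k + 1) :=
      (Nat.le_of_dvd (Nat.pos_of_ne_zero hv) ⟨u, hdu⟩).trans_lt (ZMod.val_lt d)
    exact Nat.lt_succ_iff.mp ((Nat.pow_lt_pow_iff_right hp.one_lt).mp this)
  have hu : u.Coprime (p ^ (k + 1)) :=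
    Nat.Coprime.pow_right _ (hp.coprime_iff_not_dvd.mpr hpu).symm
  let w := ZMod.unitOfCoprime u hu
  have hd_eq : d = (p : ZMod (p ^ (k + 1))) ^ i * w := by
    rw [← ZMod.natCast_zmod_val d, hdu, ZMod.coe_unitOfCoprime]
    push_cast; rfl
  refine ⟨(p : ZMod (p ^ (k + 1))) ^ (k - i) * ↑w⁻¹, ?_⟩
  rw [hd_eq, ← pow_sub_mul_pow _ hik, mul_mul_mul_comm, Units.mul_inv, mul_one, mul_comm]

theorem Function.Periodic.of_dvd {N : ℕ} [NeZero N] {α : Type*} {f : ZMod N → α} {c d : ZMod N}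
    (hf : Periodic f c) (hcd : c ∣ d) : Periodic f d := by
  obtain ⟨e, rfl⟩ := hcd
  simpa [mul_comm, ZMod.natCast_zmod_val] using hf.nat_mul e.val

theorem Function.Periodic.exists_eq_comp_castHom {m n : ℕ} (hmn : m ∣ n) {α : Type*}
    {f : ZMod n → α} (hf : Periodic f (m : ZMod n)) :
    ∃ g : ZMod m → α, ∀ x, f x = g (ZMod.castHom hmn (ZMod m) x) := by
  have hfac : FactorsThrough f (ZMod.castHom hmn (ZMod m)) := by
    intro u v huv
    obtain ⟨a, rfl⟩ := ZMod.intCast_surjective u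
    obtain ⟨b, rfl⟩ := ZMod.intCast_surjective v
    rw [map_intCast, map_intCast, ZMod.intCast_eq_intCast_iff_dvd_sub] at huv
    obtain ⟨c, hc⟩ := huv
    have hb : (b : ZMod n) = a + (c : ℤ) * (m : ZMod n) := by
      rw [← sub_eq_iff_eq_add', ← Int.cast_sub, hc]; push_cast; ring
    rw [hb, hf.int_mul c]
  exact ⟨extend (ZMod.castHom hmn (ZMod m)) f fun _ => f 0,
    fun x => (hfac.extend_apply _ x).symm⟩

namespace IsCycleShift

variable {p : ℕ}

theorem periodic_prime_pow (hp : p.Prime) {k : ℕ} {f : ZMod (p ^ (k + 1)) → ZMod (p ^ (k + 1))}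
    (hf : IsCycleShift f) (h0 : f 0 = 1) : Periodic f ((p : ZMod (p ^ (k + 1))) ^ k) := by
  have : NeZero (p ^ (k + 1)) := ⟨pow_ne_zero _ hp.ne_zero⟩
  have : Fact (1 < p ^ (k + 1)) := ⟨Nat.one_lt_pow k.succ_ne_zero hp.one_lt⟩
  obtain ⟨a, b, hab, hne⟩ := not_injective_iff.mp hf.not_injective
  exact (hf.periodic_sub h0 hab).of_dvd (ZMod.dvd_prime_pow_of_ne_zero hp (sub_ne_zero.mpr hne.symm))

theorem castHom_eq_one (hp : p.Prime) :
    ∀ {k : ℕ} {f : ZMod (p ^ (k + 1)) → ZMod (p ^ (k + 1))}, IsCycleShift f → f 0 = 1 →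
      ∀ x, ZMod.castHom (dvd_pow_self p k.succ_ne_zero) (ZMod p) (f x) = 1
  | 0, f, hf, h0, x => by
    have : NeZero (p ^ (0 + 1)) := ⟨pow_ne_zero _ hp.ne_zero⟩
    have hconst := (hf.periodic_prime_pow hp h0).of_dvd (pow_zero (p : ZMod (p ^ 1)) ▸ one_dvd x) 0
    simp only [zero_add, h0] at hconst
    rw [hconst, map_one]
  | k + 1, f, hf, h0, x => by
    have hdvd : p ^ (k + 1) ∣ p ^ (k + 1 + 1) := pow_dvd_pow p k.succ.le_succ
    let π := ZMod.castHom hdvd (ZMod (p ^ (k + 1)))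
    have hper : Periodic (π ∘ f) ((p ^ (k + 1) : ℕ) : ZMod (p ^ (k + 1 + 1))) := by
      rw [Nat.cast_pow]; exact (hf.periodic_prime_pow hp h0).comp π
    obtain ⟨g, hg⟩ := hper.exists_eq_comp_castHom hdvd
    have hg0 : g 0 = 1 := by simpa [h0] using (hg 0).symm
    have hgc : IsCycleShift g := hf.map π.toAddMonoidHom (ZMod.castHom_surjective hdvd) hg
    rw [← RingHom.congr_fun (ZMod.castHom_comp (dvd_pow_self p k.succ_ne_zero) hdvd) (f x),
      RingHom.comp_apply]
    exact (congrArg _ (hg x)).trans (castHom_eq_one hp hgc hg0 (π x))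

end IsCycleShift

theorem Subgroup.zpowers_pow_eq_self {G : Type*} [Group G] {g : G} {n : ℕ}
    (h : n.Coprime (orderOf g)) : Subgroup.zpowers (g ^ n) = Subgroup.zpowers g :=
  le_antisymm (Subgroup.zpowers_le.mpr (Subgroup.npow_mem_zpowers g n))
    (Subgroup.zpowers_le.mpr (mem_zpowers_pow_iff.mpr h))

theorem stmt5_general (p k : ℕ) (hp : p.Prime) (hk : 1 ≤ k)
    (S : CycleSet (ZMod (p ^ k)))
    (t1 : Equiv.Perm (ZMod (p ^ k))) (ht1 : t1 = Equiv.addRight 1)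
    (hgen : S.permGroup = Subgroup.zpowers t1) (h0 : S.σ 0 = t1)
    (j : ZMod (p ^ k) → ℕ) (hj : ∀ i, S.σ i = t1 ^ (j i)) :
    ∀ i, Subgroup.zpowers (S.σ i) = S.permGroup ∧ j i ≡ 1 [MOD p] := by
  obtain ⟨k, rfl⟩ : ∃ k', k = k' + 1 := ⟨k - 1, by omega⟩
  subst ht1
  have hσ : ∀ x, S.σ x = Equiv.addRight (j x : ZMod (p ^ (k + 1))) := fun x => by
    rw [hj, Equiv.nsmul_addRight, nsmul_one]
  have hj0 : ((j 0 : ℕ) : ZMod (p ^ (k + 1))) = 1 := by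
    simpa using congrArg (· 0) ((hσ 0).symm.trans h0)
  have hmod : ∀ i, j i ≡ 1 [MOD p] := fun i => by
    have h := (S.isCycleShift_of_σ_eq_addRight hσ).castHom_eq_one hp hj0 i
    rw [map_natCast, ← Nat.cast_one] at h
    exact (ZMod.natCast_eq_natCast_iff _ _ _).mp h
  have horder : orderOf (Equiv.addRight (1 : ZMod (p ^ (k + 1)))) ∣ p ^ (k + 1) :=
    orderOf_dvd_of_pow_eq_one (by simp [Equiv.nsmul_addRight])
  refine fun i => ⟨?_, hmod i⟩
  have hcop : (j i).Coprime p := (hmod i).gcd_eq.trans (Nat.gcd_one_left p)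
  rw [hj, hgen]
  exact Subgroup.zpowers_pow_eq_self ((hcop.pow_right _).coprime_dvd_right horder)

/-- Let `X = Z/p^kZ` be an indecomposable cycle set with cyclic permutation
group generated by the cycle `t₁ : x ↦ x + 1`, with `σ 0 = t₁` and
`σ i = t₁ ^ (j i)`.  Then every `σ i` generates the permutation group;
equivalently `j i ≡ 1 (mod p)` for all `i`. -/
theorem stmt5 (p k : ℕ) (hp : p.Prime) (hk : 1 ≤ k)
    (S : CycleSet (ZMod (p ^ k)))
    (t1 : Equiv.Perm (ZMod (p ^ k))) (ht1 : t1 = Equiv.addRight 1)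
    (hgen : S.permGroup = Subgroup.zpowers t1) (h0 : S.σ 0 = t1)
    (htr : S.Transitive)
    (j : ZMod (p ^ k) → ℕ) (hj : ∀ i, S.σ i = t1 ^ (j i)) :
    ∀ i, Subgroup.zpowers (S.σ i) = S.permGroup ∧ j i ≡ 1 [MOD p] :=
  stmt5_general p k hp hk S t1 ht1 hgen h0 j hj
end

section
/- Let X = {0,…,p^k−1} be an indecomposable cycle set with cyclic permutation group generated by t_1 = (0 1 … p^k−1) and σ_0 = t_1, and write σ_i = t_1^{j_i}. Then for all i and all s ≥ 1, j_i ≡ j_{i+|σ^s(X)|} (mod |σ^{s−1}(X)|), indices taken modulo p^k. -/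
lemma aux_dvd_iff (n c a b : ℕ) (hc : c ∣ n) :
    ((c : ZMod n) ∣ (a : ZMod n) - (b : ZMod n)) ↔ a ≡ b [MOD c] := by
  constructor
  · rintro ⟨t, ht⟩
    have h2 := congrArg (ZMod.castHom hc (ZMod c)) ht
    simp only [map_sub, map_mul, map_natCast] at h2
    rw [ZMod.natCast_self, zero_mul, sub_eq_zero] at h2
    exact (ZMod.natCast_eq_natCast_iff a b c).mp h2
  · intro h
    obtain ⟨t, ht⟩ := h.symm.dvd
    refine ⟨(t : ZMod n), ?_⟩
    have := congrArg (Int.cast : ℤ → ZMod n) ht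
    push_cast at this
    rw [this]

lemma aux_card (n c : ℕ) (hn : n ≠ 0) (hc : c ∣ n)
    (r : ZMod n → ZMod n → Prop) (hr : ∀ x y, r x y ↔ (c : ZMod n) ∣ x - y) :
    Nat.card (Quot r) = c := by
  haveI : NeZero n := ⟨hn⟩
  haveI : NeZero c := ⟨fun h => hn (Nat.eq_zero_of_zero_dvd (h ▸ hc))⟩
  have key : ∀ x y : ZMod n, ((c : ZMod n) ∣ x - y) ↔
      (ZMod.castHom hc (ZMod c)) x = (ZMod.castHom hc (ZMod c)) y := by
    intro x y
    constructor
    · rintro ⟨t, ht⟩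
      have h2 := congrArg (ZMod.castHom hc (ZMod c)) ht
      simp only [map_sub, map_mul, map_natCast] at h2
      rw [ZMod.natCast_self, zero_mul, sub_eq_zero] at h2
      exact h2
    · intro h
      have hx : x = ((x.val : ℕ) : ZMod n) := (ZMod.natCast_rightInverse x).symm
      have hy : y = ((y.val : ℕ) : ZMod n) := (ZMod.natCast_rightInverse y).symm
      rw [hx, hy] at h ⊢
      simp only [map_natCast] at h
      exact (aux_dvd_iff n c x.val y.val hc).mpr ((ZMod.natCast_eq_natCast_iff _ _ _).mp h)
  let F : Quot r → ZMod c := Quot.lift (ZMod.castHom hc (ZMod c))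
    (fun x y hxy => (key x y).mp ((hr x y).mp hxy))
  have hbij : Function.Bijective F := by
    constructor
    · rintro ⟨x⟩ ⟨y⟩ hxy
      exact Quot.sound ((hr x y).mpr ((key x y).mpr hxy))
    · intro z
      exact ⟨Quot.mk r ((z.val : ℕ) : ZMod n), by
        show (ZMod.castHom hc (ZMod c)) _ = z
        simp only [map_natCast]
        exact ZMod.natCast_rightInverse z⟩
  rw [Nat.card_eq_of_bijective F hbij, Nat.card_zmod]

lemma aux_pow (n m : ℕ) (z : ZMod n) :
    ((Equiv.addRight (1 : ZMod n)) ^ m) z = z + m := by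
  induction m with
  | zero => simp
  | succ m ih =>
    rw [pow_succ', Equiv.Perm.mul_apply, ih, Equiv.coe_addRight]
    push_cast
    ring

lemma aux_rel_mono {X : Type*} (S : CycleSet X) :
    ∀ (s : ℕ) (x y : X), S.rel s x y → S.rel (s + 1) x y := by
  intro s
  induction s with
  | zero =>
    intro x y h z
    have h' : x = y := h
    subst h'
    rfl
  | succ s ih =>
    intro x y h z
    exact ih _ _ (h z)

/-- Let `X = Z/p^kZ` be an indecomposable cycle set with cyclic permutation
group generated by `t₁ : x ↦ x + 1`, `σ 0 = t₁`, `σ i = t₁ ^ (j i)`.  Then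
for all `i` and `s ≥ 1`, `j i ≡ j (i + |σ^s(X)|) (mod |σ^{s-1}(X)|)`. -/
theorem stmt6 (p k : ℕ) (hp : p.Prime) (hk : 1 ≤ k)
    (S : CycleSet (ZMod (p ^ k)))
    (t1 : Equiv.Perm (ZMod (p ^ k))) (ht1 : t1 = Equiv.addRight 1)
    (hgen : S.permGroup = Subgroup.zpowers t1) (h0 : S.σ 0 = t1)
    (htr : S.Transitive)
    (j : ZMod (p ^ k) → ℕ) (hj : ∀ i, S.σ i = t1 ^ (j i)) :
    ∀ (i : ZMod (p ^ k)) (s : ℕ),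
      j i ≡ j (i + (S.retCard (s + 1) : ZMod (p ^ k))) [MOD S.retCard s] := by
  have hn0 : p ^ k ≠ 0 := pow_ne_zero k hp.pos.ne'
  haveI : NeZero (p ^ k) := ⟨hn0⟩
  classical
  have hσ : ∀ x z : ZMod (p ^ k), S.σ x z = z + (j x : ZMod (p ^ k)) := by
    intro x z
    rw [hj, ht1]
    exact aux_pow _ _ _
  -- the fundamental relation coming from the cycle-set equation
  have star : ∀ x : ZMod (p ^ k),
      ((j x : ZMod (p ^ k))) + (j ((j x : ZMod (p ^ k))) : ZMod (p ^ k)) =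
        1 + (j (x + 1) : ZMod (p ^ k)) := by
    intro x
    have hj0 : ((j 0 : ℕ) : ZMod (p ^ k)) = 1 := by
      have h1 : S.σ 0 0 = (0 : ZMod (p ^ k)) + (j 0 : ZMod (p ^ k)) := hσ 0 0
      rw [h0, ht1] at h1
      simpa using h1.symm
    have h := S.cycl x 0 0
    simp only [hσ, zero_add, hj0] at h
    simpa using h
  -- main structural induction
  have main : ∀ s : ℕ, ∃ c : ℕ, c ∣ p ^ k ∧
      (∀ x y : ZMod (p ^ k), S.rel s x y ↔ (c : ZMod (p ^ k)) ∣ x - y) := by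
    intro s
    induction s with
    | zero =>
      refine ⟨p ^ k, dvd_rfl, fun x y => ?_⟩
      rw [ZMod.natCast_self, zero_dvd_iff, sub_eq_zero]
      exact Iff.rfl
    | succ s ih =>
      obtain ⟨c, hcdvd, hc⟩ := ih
      -- characterize rel (s+1)
      have hrel : ∀ x y : ZMod (p ^ k), S.rel (s + 1) x y ↔
          (c : ZMod (p ^ k)) ∣ (j x : ZMod (p ^ k)) - (j y : ZMod (p ^ k)) := by
        intro x y
        constructor
        · intro h
          have h1 := (hc _ _).mp (h 0)
          rw [hσ, hσ] at h1
          simpa using h1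
        · intro h z
          rw [hc, hσ, hσ]
          have e : (z + (j x : ZMod (p ^ k))) - (z + (j y : ZMod (p ^ k))) =
              (j x : ZMod (p ^ k)) - (j y : ZMod (p ^ k)) := by ring
          rw [e]
          exact h
      -- translation invariance of the relation D x y := c ∣ jx - jy
      have Dstep : ∀ x y : ZMod (p ^ k),
          (c : ZMod (p ^ k)) ∣ (j x : ZMod (p ^ k)) - (j y : ZMod (p ^ k)) →
          (c : ZMod (p ^ k)) ∣ (j (x + 1) : ZMod (p ^ k)) - (j (y + 1) : ZMod (p ^ k)) := by
        intro x y hxy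
        have h2 : (c : ZMod (p ^ k)) ∣
            (j ((j x : ZMod (p ^ k))) : ZMod (p ^ k)) -
            (j ((j y : ZMod (p ^ k))) : ZMod (p ^ k)) := by
          apply (hrel _ _).mp
          apply aux_rel_mono
          exact (hc _ _).mpr hxy
        have key : (j (x + 1) : ZMod (p ^ k)) - (j (y + 1) : ZMod (p ^ k)) =
            ((j x : ZMod (p ^ k)) - (j y : ZMod (p ^ k))) +
            ((j ((j x : ZMod (p ^ k))) : ZMod (p ^ k)) -
             (j ((j y : ZMod (p ^ k))) : ZMod (p ^ k))) := by
          have sx := star x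
          have sy := star y
          linear_combination sy - sx
        rw [key]
        exact dvd_add hxy h2
      have DtransN : ∀ (m : ℕ) (x y : ZMod (p ^ k)),
          (c : ZMod (p ^ k)) ∣ (j x : ZMod (p ^ k)) - (j y : ZMod (p ^ k)) →
          (c : ZMod (p ^ k)) ∣ (j (x + (m : ZMod (p ^ k))) : ZMod (p ^ k)) -
            (j (y + (m : ZMod (p ^ k))) : ZMod (p ^ k)) := by
        intro m
        induction m with
        | zero => intro x y h; simpa using h
        | succ m ih2 =>
          intro x y h
          have hstep := Dstep _ _ (ih2 x y h)
          have e1 : x + ((m + 1 : ℕ) : ZMod (p ^ k)) = (x + (m : ZMod (p ^ k))) + 1 := by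
            push_cast; ring
          have e2 : y + ((m + 1 : ℕ) : ZMod (p ^ k)) = (y + (m : ZMod (p ^ k))) + 1 := by
            push_cast; ring
          rw [e1, e2]
          exact hstep
      have Dtrans : ∀ (t x y : ZMod (p ^ k)),
          (c : ZMod (p ^ k)) ∣ (j x : ZMod (p ^ k)) - (j y : ZMod (p ^ k)) →
          (c : ZMod (p ^ k)) ∣ (j (x + t) : ZMod (p ^ k)) - (j (y + t) : ZMod (p ^ k)) := by
        intro t x y h
        have := DtransN t.val x y h
        rwa [ZMod.natCast_rightInverse t] at this
      have Dshift : ∀ x y : ZMod (p ^ k),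
          ((c : ZMod (p ^ k)) ∣ (j x : ZMod (p ^ k)) - (j y : ZMod (p ^ k))) ↔
          ((c : ZMod (p ^ k)) ∣ (j 0 : ZMod (p ^ k)) - (j (y - x) : ZMod (p ^ k))) := by
        intro x y
        constructor
        · intro h
          have := Dtrans (-x) x y h
          simpa [sub_eq_add_neg] using this
        · intro h
          have := Dtrans x 0 (y - x) h
          simpa using this
      have Dmul : ∀ d : ZMod (p ^ k),
          ((c : ZMod (p ^ k)) ∣ (j 0 : ZMod (p ^ k)) - (j d : ZMod (p ^ k))) →
          ∀ w : ZMod (p ^ k),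
          (c : ZMod (p ^ k)) ∣ (j 0 : ZMod (p ^ k)) - (j (d * w) : ZMod (p ^ k)) := by
        intro d hd w
        have hm : ∀ m : ℕ, (c : ZMod (p ^ k)) ∣
            (j 0 : ZMod (p ^ k)) - (j (d * (m : ZMod (p ^ k))) : ZMod (p ^ k)) := by
          intro m
          induction m with
          | zero => simp
          | succ m ih2 =>
            have hstep := Dtrans (d * (m : ZMod (p ^ k))) 0 d hd
            simp only [zero_add] at hstep
            have e : d * ((m + 1 : ℕ) : ZMod (p ^ k)) = d + d * (m : ZMod (p ^ k)) := by
              push_cast; ring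
            rw [e]
            have := dvd_add ih2 hstep
            rwa [sub_add_sub_cancel] at this
        have := hm w.val
        rwa [ZMod.natCast_rightInverse w] at this
      -- find the minimal power of p
      have hex : ∃ m : ℕ, (c : ZMod (p ^ k)) ∣
          (j 0 : ZMod (p ^ k)) - (j ((p ^ m : ℕ) : ZMod (p ^ k)) : ZMod (p ^ k)) := by
        refine ⟨k, ?_⟩
        rw [ZMod.natCast_self]
        simp
      set m := Nat.find hex with hm
      have hmk : m ≤ k := Nat.find_min' hex (by rw [ZMod.natCast_self]; simp)
      refine ⟨p ^ m, pow_dvd_pow p hmk, fun x y => ?_⟩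
      rw [hrel, Dshift]
      constructor
      · -- D 0 (y - x) → p^m ∣ x - y
        intro h
        have hed : ((y - x).val : ZMod (p ^ k)) = y - x := ZMod.natCast_rightInverse _
        set e := (y - x).val with he
        set g := Nat.gcd e (p ^ k) with hg
        have hbez : ((g : ℕ) : ZMod (p ^ k)) =
            (y - x) * ((Nat.gcdA e (p ^ k) : ℤ) : ZMod (p ^ k)) := by
          have hb := Nat.gcd_eq_gcd_ab e (p ^ k)
          have h2 := congrArg (Int.cast : ℤ → ZMod (p ^ k)) hb
          push_cast at h2
          have hz : ((p : ZMod (p ^ k))) ^ k = 0 := by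
            have h3 := ZMod.natCast_self (p ^ k)
            push_cast at h3
            exact h3
          rw [hz, hed] at h2
          rw [hg, h2]
          ring
        have hDg : (c : ZMod (p ^ k)) ∣ (j 0 : ZMod (p ^ k)) -
            (j ((g : ℕ) : ZMod (p ^ k)) : ZMod (p ^ k)) := by
          rw [hbez]
          exact Dmul _ h _
        have hgdvd : g ∣ p ^ k := Nat.gcd_dvd_right _ _
        obtain ⟨m', hm'k, hgm'⟩ := (Nat.dvd_prime_pow hp).mp hgdvd
        have hmm' : m ≤ m' := Nat.find_min' hex (by rw [← hgm']; exact hDg)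
        have h1 : ((p ^ m : ℕ) : ZMod (p ^ k)) ∣ ((g : ℕ) : ZMod (p ^ k)) := by
          rw [hgm']
          exact Nat.cast_dvd_cast (pow_dvd_pow p hmm')
        have h2 : ((g : ℕ) : ZMod (p ^ k)) ∣ y - x := by
          rw [← hed]
          exact Nat.cast_dvd_cast (Nat.gcd_dvd_left _ _)
        have h3 := h1.trans h2
        have h4 : x - y = -(y - x) := by ring
        rw [h4]
        exact dvd_neg.mpr h3
      · -- p^m ∣ x - y → D 0 (y - x)
        rintro ⟨t, ht⟩
        have h5 : y - x = ((p ^ m : ℕ) : ZMod (p ^ k)) * (-t) := by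
          have h6 : y - x = -(x - y) := by ring
          rw [h6, ht]; ring
        rw [h5]
        exact Dmul _ (Nat.find_spec hex) (-t)
  -- assemble
  intro i s
  obtain ⟨cs, hcsd, hcs⟩ := main s
  obtain ⟨ct, hctd, hct⟩ := main (s + 1)
  have e1 : S.retCard s = cs := aux_card _ _ hn0 hcsd _ hcs
  have e2 : S.retCard (s + 1) = ct := aux_card _ _ hn0 hctd _ hct
  rw [e1, e2]
  have hrel2 : S.rel (s + 1) i (i + (ct : ZMod (p ^ k))) := by
    rw [hct]
    exact ⟨-1, by ring⟩
  have h1 := (hcs _ _).mp (hrel2 0)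
  rw [hσ, hσ] at h1
  have h2 : (cs : ZMod (p ^ k)) ∣ (j i : ZMod (p ^ k)) -
      (j (i + (ct : ZMod (p ^ k))) : ZMod (p ^ k)) := by simpa using h1
  exact (aux_dvd_iff _ _ _ _ hcsd).mp h2
end

section
/- Let p be prime and f : Z/pZ → {0,…,p−1} a bijection with f(0)=0 satisfying f(i+1)+f(j) ≡ f(i)+f(j+1) (mod p) for all i,j. Define on X = {0,…,p^2−1} the operation i·j := j + 1 + p·f(i mod p) (mod p^2). Then (X,·) is an indecomposable cycle set of multipermutational level 2 whose permutation group is cyclic of order p^2, generated by the cycle (0 1 … p^2−1). -/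
/-- `f : Z/pZ -> {0,...,p-1}` is a bijection with `f 0 = 0` satisfying
`f(i+1) + f(j) = f(i) + f(j+1) (mod p)`. -/
def Good (p : ℕ) (f : ZMod p → Fin p) : Prop :=
  Function.Bijective f ∧ (f 0).val = 0 ∧
    ∀ i j : ZMod p,
      ((f (i + 1)).val : ZMod p) + ((f j).val : ZMod p) =
        ((f i).val : ZMod p) + ((f (j + 1)).val : ZMod p)

/-- The left multiplication `j ↦ j + 1 + p*f(i mod p)` on `Z/p^2Z`. -/
def shiftPerm (p : ℕ) (f : ZMod p → Fin p) (i : ZMod (p ^ 2)) :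
    Equiv.Perm (ZMod (p ^ 2)) :=
  Equiv.addRight (1 + (p : ZMod (p ^ 2)) * ((f ((i.val : ZMod p))).val : ZMod (p ^ 2)))

/-- Given a `Good` map `f`, the operation `i*j = j + 1 + p*f(i mod p)` on
`Z/p^2Z` is an indecomposable cycle set of multipermutational level 2 whose
permutation group is cyclic of order `p^2` generated by `x ↦ x + 1`. -/
theorem stmt9 (p : ℕ) (hp : p.Prime) (f : ZMod p → Fin p) (hf : Good p f) :
    ∃ S : CycleSet (ZMod (p ^ 2)),
      (∀ i, S.σ i = shiftPerm p f i) ∧ S.Transitive ∧ S.MultipermLevel 2 ∧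
        S.permGroup = Subgroup.zpowers (Equiv.addRight (1 : ZMod (p ^ 2))) ∧
        Nat.card S.permGroup = p ^ 2 := by
  obtain ⟨hbij, hf0, hrel⟩ := hf
  haveI : NeZero p := ⟨hp.ne_zero⟩
  haveI : NeZero (p ^ 2) := ⟨pow_ne_zero 2 hp.ne_zero⟩
  haveI : Fact (1 < p) := ⟨hp.one_lt⟩
  haveI : Fact (1 < p ^ 2) := ⟨one_lt_pow₀ hp.one_lt (by norm_num)⟩
  set π : ZMod (p ^ 2) →+* ZMod p :=
    ZMod.castHom (dvd_pow_self p two_ne_zero) (ZMod p) with hπdef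
  have hπ : ∀ x : ZMod (p ^ 2), ((x.val : ZMod p)) = π x := fun x => by
    rw [ZMod.natCast_val, hπdef, ZMod.castHom_apply]
  set c : ZMod (p ^ 2) → ZMod (p ^ 2) :=
    fun x => 1 + (p : ZMod (p ^ 2)) * ((f (π x)).val : ZMod (p ^ 2)) with hcdef
  have happ : ∀ i j, shiftPerm p f i j = j + c i := fun i j => by
    simp only [shiftPerm, Equiv.coe_addRight, hcdef, hπ]
  have hπc : ∀ x, π (c x) = 1 := fun x => by
    simp [hcdef, map_add, map_mul, map_one, map_natCast, ZMod.natCast_self]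
  have hcc : ∀ x y : ZMod (p ^ 2),
      c (y + c x) = 1 + (p : ZMod (p ^ 2)) * ((f (π y + 1)).val : ZMod (p ^ 2)) := by
    intro x y
    show 1 + (p : ZMod (p ^ 2)) * ((f (π (y + c x))).val : ZMod (p ^ 2)) = _
    rw [map_add, hπc x]
  have hmul : ∀ a b : ℕ, ((a : ZMod p) = (b : ZMod p)) →
      (p : ZMod (p ^ 2)) * (a : ZMod (p ^ 2)) = (p : ZMod (p ^ 2)) * (b : ZMod (p ^ 2)) := by
    intro a b h
    have h1 : a ≡ b [MOD p] := (ZMod.natCast_eq_natCast_iff a b p).mp h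
    have h2 : p * a ≡ p * b [MOD p ^ 2] := by
      rw [pow_two]; exact h1.mul_left' (c := p)
    have h3 := (ZMod.natCast_eq_natCast_iff (p * a) (p * b) (p ^ 2)).mpr h2
    push_cast at h3
    exact h3
  have hkey : ∀ x y : ZMod (p ^ 2), c x + c (y + c x) = c y + c (x + c y) := by
    intro x y
    rw [hcc, hcc]
    have h := hrel (π y) (π x)
    have h2 := hmul ((f (π x)).val + (f (π y + 1)).val) ((f (π y)).val + (f (π x + 1)).val)
      (by push_cast; linear_combination h)
    push_cast at h2
    conv_lhs => rw [hcdef]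
    conv_rhs => rw [hcdef]
    simp only
    linear_combination h2
  have hcycl : ∀ x y z : ZMod (p ^ 2),
      shiftPerm p f (shiftPerm p f x y) (shiftPerm p f x z) =
        shiftPerm p f (shiftPerm p f y x) (shiftPerm p f y z) := by
    intro x y z
    simp only [happ]
    linear_combination hkey x y
  have hpow : ∀ n : ℕ, (Equiv.addRight (1 : ZMod (p ^ 2))) ^ n
      = Equiv.addRight ((n : ZMod (p ^ 2))) := by
    intro n
    induction n with
    | zero => ext x; simp
    | succ n ih =>
      ext x
      simp [pow_succ, ih, Equiv.Perm.mul_apply]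
      push_cast
      ring
  have hc0 : c 0 = 1 := by
    simp [hcdef, map_zero, hf0]
  have hsp : ∀ x, shiftPerm p f x = Equiv.addRight (c x) :=
    fun x => Equiv.ext fun j => by rw [happ]; rfl
  have hsp0 : Equiv.addRight (1 : ZMod (p ^ 2)) = shiftPerm p f 0 := by
    rw [hsp 0, hc0]
  have hmem : ∀ x, shiftPerm p f x ∈
      Subgroup.zpowers (Equiv.addRight (1 : ZMod (p ^ 2))) := by
    intro x
    rw [hsp x, Subgroup.mem_zpowers_iff]
    refine ⟨((c x).val : ℤ), ?_⟩
    show (Equiv.addRight (1 : ZMod (p ^ 2))) ^ (((c x).val : ℕ) : ℤ) = _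
    rw [zpow_natCast, hpow]
    simp [ZMod.natCast_val, ZMod.cast_id]
  have hgroup : Subgroup.closure (Set.range (fun i : ZMod (p ^ 2) => shiftPerm p f i))
      = Subgroup.zpowers (Equiv.addRight (1 : ZMod (p ^ 2))) := by
    apply le_antisymm
    · refine (Subgroup.closure_le _).mpr ?_
      rintro g ⟨x, rfl⟩
      exact hmem x
    · rw [Subgroup.zpowers_le, hsp0]
      exact Subgroup.subset_closure ⟨0, rfl⟩
  refine ⟨⟨fun i => shiftPerm p f i, hcycl⟩, fun i => rfl, ?_, ?_, ?_, ?_⟩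
  · -- Transitive
    intro x y
    refine ⟨(Equiv.addRight (1 : ZMod (p ^ 2))) ^ (y - x).val, ?_, ?_⟩
    · rw [CycleSet.permGroup]
      refine Subgroup.pow_mem _ ?_ _
      rw [hsp0]
      exact Subgroup.subset_closure ⟨0, rfl⟩
    · rw [hpow]
      show x + ((y - x).val : ZMod (p ^ 2)) = y
      rw [ZMod.natCast_val, ZMod.cast_id]
      ring
  · -- MultipermLevel 2
    constructor
    · intro x y z w
      show shiftPerm p f (shiftPerm p f x z) w = shiftPerm p f (shiftPerm p f y z) w
      simp only [happ]
      linear_combination (hcc x z) - (hcc y z)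
    · intro k hk
      interval_cases k
      · intro h
        have : (0 : ZMod (p ^ 2)) = 1 := h 0 1
        exact zero_ne_one this
      · intro h
        have h1 : shiftPerm p f 0 0 = shiftPerm p f 1 0 := h 0 1 0
        rw [happ, happ, hc0] at h1
        have hc1 : c 1 = 1 + (p : ZMod (p ^ 2)) * ((f 1).val : ZMod (p ^ 2)) := by
          show 1 + (p : ZMod (p ^ 2)) * ((f (π 1)).val : ZMod (p ^ 2)) = _
          rw [map_one]
        rw [hc1] at h1
        have h2 : (p : ZMod (p ^ 2)) * ((f 1).val : ZMod (p ^ 2)) = 0 := by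
          linear_combination -h1
        have h3 : ((p * (f 1).val : ℕ) : ZMod (p ^ 2)) = 0 := by push_cast; exact h2
        have hd := (ZMod.natCast_eq_zero_iff (p * (f 1).val) (p ^ 2)).mp h3
        have hv1 : (f 1).val ≠ 0 := by
          intro hv
          have : f 1 = f 0 := Fin.ext (by rw [hv, hf0])
          have := hbij.injective this
          exact one_ne_zero this
        have hvlt : (f 1).val < p := (f 1).isLt
        have hple : p ^ 2 ≤ p * (f 1).val :=
          Nat.le_of_dvd (Nat.mul_pos hp.pos (Nat.pos_of_ne_zero hv1)) hd
        have hlt : p * (f 1).val < p ^ 2 := by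
          rw [pow_two]
          exact Nat.mul_lt_mul_of_pos_left hvlt hp.pos
        omega
  · -- permGroup = zpowers
    rw [CycleSet.permGroup]
    exact hgroup
  · -- card
    have : (CycleSet.mk (fun i => shiftPerm p f i) hcycl).permGroup
        = Subgroup.zpowers (Equiv.addRight (1 : ZMod (p ^ 2))) := by
      rw [CycleSet.permGroup]; exact hgroup
    rw [this, Nat.card_zpowers, orderOf_eq_iff (pow_pos hp.pos 2)]
    constructor
    · rw [hpow]
      ext x
      simp [ZMod.natCast_self]
    · intro m hm hm0 hcon
      rw [hpow] at hcon
      have h0 : (m : ZMod (p ^ 2)) = 0 := by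
        have := congrArg (fun g : Equiv.Perm (ZMod (p ^ 2)) => g 0) hcon
        simpa using this
      have hd := (ZMod.natCast_eq_zero_iff m (p ^ 2)).mp h0
      have := Nat.le_of_dvd hm0 hd
      omega
end

section
/- Let p be prime and f, g : Z/pZ → {0,…,p−1} be bijections with f(0)=g(0)=0 satisfying f(i+1)+f(j) ≡ f(i)+f(j+1) (mod p) (and similarly for g). Define cycle set structures on {0,…,p^2−1} by i·_f j = j+1+p f(i mod p) (mod p^2) and i·_g j = j+1+p g(i mod p) (mod p^2). Then these two cycle sets are isomorphic if and only if f = g. -/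
theorem lin (p : ℕ) [NeZero p] (f : ZMod p → Fin p) (hf : Good p f) :
    ∀ x : ZMod p, ((f x).val : ZMod p) = x * ((f 1).val : ZMod p) := by
  have key : ∀ n : ℕ, ((f (n : ZMod p)).val : ZMod p) = (n : ZMod p) * ((f 1).val : ZMod p) := by
    intro n
    induction n with
    | zero => simp [hf.2.1]
    | succ n ih =>
      have h := hf.2.2 (n : ZMod p) 0
      rw [zero_add, hf.2.1, Nat.cast_zero, add_zero] at h
      push_cast
      rw [h, ih]; ring
  intro x
  have hx : ((x.val : ℕ) : ZMod p) = x := by rw [ZMod.natCast_val, ZMod.cast_id]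
  rw [← hx, key]

theorem pcancel (p : ℕ) (hp : 0 < p) (a b : ℕ)
    (h : (p : ZMod (p^2)) * a = (p : ZMod (p^2)) * b) : (a : ZMod p) = b := by
  rw [← Nat.cast_mul, ← Nat.cast_mul, ZMod.natCast_eq_natCast_iff] at h
  rw [ZMod.natCast_eq_natCast_iff]
  rw [pow_two] at h
  exact Nat.ModEq.mul_left_cancel' hp.ne' h

/-- Two cycle sets on `Z/p^2Z` built from `Good` maps `f` and `g` via
`i*j = j + 1 + p*f(i mod p)` are isomorphic iff `f = g`. -/
theorem stmt10 (p : ℕ) (hp : p.Prime) (f g : ZMod p → Fin p)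
    (hf : Good p f) (hg : Good p g)
    (S T : CycleSet (ZMod (p ^ 2)))
    (hS : ∀ i, S.σ i = shiftPerm p f i) (hT : ∀ i, T.σ i = shiftPerm p g i) :
    S.Isomorphic T ↔ f = g := by
  haveI : Fact p.Prime := ⟨hp⟩
  haveI : NeZero (p ^ 2) := ⟨pow_ne_zero 2 hp.ne_zero⟩
  constructor
  · rintro ⟨F, hFb, hFr⟩
    simp only [hS, hT, shiftPerm, Equiv.coe_addRight] at hFr
    set π : ZMod (p ^ 2) →+* ZMod p := ZMod.castHom (dvd_pow_self p two_ne_zero) (ZMod p) with hπdef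
    have hπ : ∀ x : ZMod (p ^ 2), ((x.val : ℕ) : ZMod p) = π x := fun x => by
      rw [ZMod.natCast_val, hπdef, ZMod.castHom_apply]
    have hπp : π (p : ZMod (p ^ 2)) = 0 := by
      rw [map_natCast, ZMod.natCast_self]
    have hpp : (p : ZMod (p ^ 2)) * p = 0 := by
      rw [← Nat.cast_mul, ← pow_two]; exact ZMod.natCast_self _
    set Cf : ZMod (p ^ 2) → ZMod (p ^ 2) :=
      fun i => 1 + (p : ZMod (p ^ 2)) * ((f ((i.val : ZMod p))).val : ZMod (p ^ 2)) with hCf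
    set Cg : ZMod (p ^ 2) → ZMod (p ^ 2) :=
      fun i => 1 + (p : ZMod (p ^ 2)) * ((g ((i.val : ZMod p))).val : ZMod (p ^ 2)) with hCg
    have hFr' : ∀ i j, F (j + Cf i) = F j + Cg (F i) := fun i j => hFr i j
    have hCf0 : Cf 0 = 1 := by
      simp [hCf, ZMod.val_zero, hf.2.1]
    set E : ZMod (p ^ 2) := Cg (F 0) with hE
    have h1 : ∀ j, F (j + 1) = F j + E := fun j => by
      have := hFr' 0 j; rwa [hCf0] at this
    have h2 : ∀ n : ℕ, F (n : ZMod (p ^ 2)) = F 0 + n * E := by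
      intro n
      induction n with
      | zero => simp
      | succ n ih =>
        push_cast
        rw [h1, ih]; ring
    have h3 : ∀ j, F j = F 0 + j * E := by
      intro j
      have hx : ((j.val : ℕ) : ZMod (p ^ 2)) = j := by rw [ZMod.natCast_val, ZMod.cast_id]
      rw [← hx, h2]
    have h4 : ∀ i, Cf i * E = Cg (F i) := by
      intro i
      have h := hFr' i 0
      rw [zero_add, h3 (Cf i), h3 0, zero_mul, add_zero] at h
      exact add_left_cancel h
    have h6 : ∀ i, (((f ((i.val : ZMod p))).val + (g (((F 0).val : ZMod p))).val : ℕ) : ZMod p)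
        = ((g (((F i).val : ZMod p))).val : ZMod p) := by
      intro i
      apply pcancel p hp.pos
      have h := h4 i
      rw [hCf, hCg, hE, hCg] at h
      push_cast
      set A : ZMod (p ^ 2) := ((f ((i.val : ZMod p))).val : ZMod (p ^ 2))
      set B : ZMod (p ^ 2) := ((g (((F 0).val : ZMod p))).val : ZMod (p ^ 2))
      set C : ZMod (p ^ 2) := ((g (((F i).val : ZMod p))).val : ZMod (p ^ 2))
      show (p : ZMod (p ^ 2)) * (A + B) = p * C
      linear_combination h - A * B * hpp
    have hπE : π E = 1 := by
      rw [hE, hCg]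
      simp only [map_add, map_mul, map_one, hπp, zero_mul, add_zero]
    have h7 : ∀ i, π (F i) = π (F 0) + π i := by
      intro i
      rw [h3 i, map_add, map_mul, hπE, mul_one]
    have h6' : ∀ i, ((f (π i)).val : ZMod p) + ((g (π (F 0))).val : ZMod p)
        = ((g (π (F i))).val : ZMod p) := by
      intro i
      have h := h6 i
      push_cast at h
      simp only [hπ] at h
      exact h
    have h8 : ∀ x : ZMod p, ((f x).val : ZMod p) + ((g (π (F 0))).val : ZMod p)
        = ((g (π (F 0) + x)).val : ZMod p) := by
      intro x
      have hi : π ((x.val : ℕ) : ZMod (p ^ 2)) = x := by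
        rw [map_natCast, ZMod.natCast_val, ZMod.cast_id]
      have h := h6' ((x.val : ℕ) : ZMod (p ^ 2))
      rw [h7 ((x.val : ℕ) : ZMod (p ^ 2)), hi] at h
      exact h
    -- now use linearity
    have hf1 : ((f 1).val : ZMod p) = ((g 1).val : ZMod p) := by
      have h := h8 1
      rw [lin p f hf, lin p g hg (π (F 0) + 1), lin p g hg] at h
      linear_combination h
    funext x
    apply Fin.val_injective
    have h : ((f x).val : ZMod p) = ((g x).val : ZMod p) := by
      rw [lin p f hf, lin p g hg, hf1]
    have h2 := congrArg ZMod.val h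
    rwa [ZMod.val_natCast_of_lt (f x).isLt, ZMod.val_natCast_of_lt (g x).isLt] at h2
  · rintro rfl
    exact ⟨id, Function.bijective_id, fun x y => by simp [hS, hT]⟩
end

section
/- For every prime p there are, up to isomorphism, exactly p indecomposable cycle sets of cardinality p^2 with cyclic permutation group: one of multipermutational level 1 (namely i·j = j+1 on Z/p^2Z) and p−1 of level 2, given by i·j = j+1+p f(i mod p) on Z/p^2Z where f : Z/pZ → {0,…,p−1} is a bijection with f(0)=0 satisfying f(i+1)+f(j) ≡ f(i)+f(j+1) (mod p). -/
theorem ZMod.induction_on_add_one {n : ℕ} [NeZero n] {P : ZMod n → Prop} (zero : P 0)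
    (succ : ∀ a, P a → P (a + 1)) (a : ZMod n) : P a := by
  rw [← ZMod.natCast_zmod_val a]
  induction a.val with
  | zero => simpa using zero
  | succ k ih => simpa using succ _ ih

theorem ZMod.eq_add_mul_of_add_one {n : ℕ} [NeZero n] {f : ZMod n → ZMod n} {A : ZMod n}
    (h : ∀ y, f (y + 1) = f y + A) (y : ZMod n) : f y = f 0 + y * A :=
  ZMod.induction_on_add_one (P := fun y => f y = f 0 + y * A) (by simp)
    (fun a ih => by rw [h, ih]; ring) y

theorem Function.Periodic.zmod_mul {n : ℕ} [NeZero n] {α : Type*} {f : ZMod n → α}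
    {c : ZMod n} (h : Function.Periodic f c) (k : ZMod n) : Function.Periodic f (k * c) := by
  simpa using h.nat_mul k.val

section ReduceMod

variable {p : ℕ}

def reduceMod (p : ℕ) : ZMod (p ^ 2) →+* ZMod p :=
  ZMod.castHom (dvd_pow_self p two_ne_zero) (ZMod p)

theorem reduceMod_apply [NeZero p] (y : ZMod (p ^ 2)) : reduceMod p y = (y.val : ZMod p) := by
  rw [reduceMod, ZMod.castHom_apply, ZMod.cast_eq_val]

theorem reduceMod_surjective : Function.Surjective (reduceMod p) :=
  ZMod.castHom_surjective _

theorem reduceMod_natCast_val [NeZero p] (x : ZMod p) :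
    reduceMod p (x.val : ZMod (p ^ 2)) = x := by
  rw [map_natCast, ZMod.natCast_zmod_val]

theorem natCast_mul_self_eq_zero (p : ℕ) : (p : ZMod (p ^ 2)) * p = 0 := by
  rw [← Nat.cast_mul, ← sq, ZMod.natCast_self]

theorem reduceMod_eq_zero_iff [NeZero p] {y : ZMod (p ^ 2)} :
    reduceMod p y = 0 ↔ ∃ w, y = p * w := by
  constructor
  · rw [reduceMod_apply, ZMod.natCast_eq_zero_iff]
    rintro ⟨k, hk⟩
    exact ⟨k, by rw [← ZMod.natCast_zmod_val y, hk, Nat.cast_mul]⟩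
  · rintro ⟨w, rfl⟩
    rw [map_mul, map_natCast, ZMod.natCast_self, zero_mul]

theorem exists_eq_natCast_val_reduceMod_add [NeZero p] (a : ZMod (p ^ 2)) :
    ∃ w, a = (reduceMod p a).val + p * w := by
  have hker : reduceMod p (a - (reduceMod p a).val) = 0 := by
    rw [map_sub, reduceMod_natCast_val, sub_self]
  obtain ⟨w, hw⟩ := reduceMod_eq_zero_iff.mp hker
  exact ⟨w, by rw [← hw, add_sub_cancel]⟩

theorem mul_self_eq_zero_of_reduceMod_eq_zero [NeZero p] {c : ZMod (p ^ 2)}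
    (hc : reduceMod p c = 0) : c * c = 0 := by
  obtain ⟨w, rfl⟩ := reduceMod_eq_zero_iff.mp hc
  linear_combination w * w * natCast_mul_self_eq_zero p

theorem natCast_mul_eq_zero_iff [NeZero p] {x : ZMod (p ^ 2)} :
    (p : ZMod (p ^ 2)) * x = 0 ↔ reduceMod p x = 0 := by
  refine ⟨fun h => ?_, fun h => ?_⟩
  · rw [← ZMod.natCast_zmod_val x, ← Nat.cast_mul, ZMod.natCast_eq_zero_iff] at h
    rw [reduceMod_apply, ZMod.natCast_eq_zero_iff]
    exact Nat.dvd_of_mul_dvd_mul_left (Nat.pos_of_neZero p) ((dvd_of_eq (sq p).symm).trans h)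
  · obtain ⟨w, rfl⟩ := reduceMod_eq_zero_iff.mp h
    linear_combination w * natCast_mul_self_eq_zero p

theorem natCast_mul_eq_natCast_mul_iff [NeZero p] {x y : ZMod (p ^ 2)} :
    (p : ZMod (p ^ 2)) * x = (p : ZMod (p ^ 2)) * y ↔ reduceMod p x = reduceMod p y := by
  rw [← sub_eq_zero, ← mul_sub, natCast_mul_eq_zero_iff, map_sub, sub_eq_zero]

theorem isUnit_of_reduceMod_ne_zero (hp : p.Prime) {y : ZMod (p ^ 2)}
    (hy : reduceMod p y ≠ 0) : IsUnit y := by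
  have : NeZero p := ⟨hp.ne_zero⟩
  rw [← ZMod.natCast_zmod_val y, ZMod.isUnit_natCast_iff_not_dvd_pow hp two_pos]
  rwa [reduceMod_apply, Ne, ZMod.natCast_eq_zero_iff] at hy

theorem exists_mul_eq_natCast_of_ne_zero (hp : p.Prime) {m : ZMod (p ^ 2)} (hm : m ≠ 0) :
    ∃ k, k * m = p := by
  have : NeZero p := ⟨hp.ne_zero⟩
  obtain ⟨i, hi, hgcd⟩ := (Nat.dvd_prime_pow hp).mp (Nat.gcd_dvd_right m.val (p ^ 2))
  have hi1 : i ≤ 1 := by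
    by_contra! hi2
    obtain rfl : i = 2 := by omega
    have hdvd := Nat.gcd_dvd_left m.val (p ^ 2)
    rw [hgcd] at hdvd
    exact hm ((ZMod.val_eq_zero m).mp (Nat.eq_zero_of_dvd_of_lt hdvd (ZMod.val_lt m)))
  refine ⟨(p : ZMod (p ^ 2)) ^ (1 - i) * m⁻¹, ?_⟩
  rw [mul_assoc, mul_comm m⁻¹, ZMod.mul_inv_eq_gcd, hgcd, Nat.cast_pow, ← pow_add,
    Nat.sub_add_cancel hi1, pow_one]

end ReduceMod

def IsCycleTranslation {A : Type*} [AddCommGroup A] (t : A → A) : Prop :=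
  ∀ a b, t a + t (b + t a) = t b + t (a + t b)

namespace IsCycleTranslation

theorem one_add_mul {R : Type*} [CommRing R] {c : R} (hc : c * c = 0) :
    IsCycleTranslation (fun a : R => 1 + c * a) := by
  intro a b
  linear_combination (a - b) * hc

theorem map {A B : Type*} [AddCommGroup A] [AddCommGroup B] {t : A → A} {v : B → B}
    (ht : IsCycleTranslation t) (π : A →+ B) (hπ : Function.Surjective π)
    (hsemiconj : ∀ a, π (t a) = v (π a)) : IsCycleTranslation v := by
  intro a b
  obtain ⟨a, rfl⟩ := hπ a
  obtain ⟨b, rfl⟩ := hπ b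
  simpa [hsemiconj] using congrArg π (ht a b)

section ZMod

variable {n : ℕ} {t : ZMod n → ZMod n}

theorem add_one_eq (ht : IsCycleTranslation t) (h0 : t 0 = 1) (b : ZMod n) :
    t (b + 1) = t b + t (t b) - 1 := by
  have h := ht 0 b
  rw [h0, zero_add] at h
  linear_combination h

theorem exists_periodic [NeZero n] [Nontrivial (ZMod n)] (ht : IsCycleTranslation t)
    (h0 : t 0 = 1) : ∃ m ≠ 0, Function.Periodic t m := by
  -- a preimage `k` of `0` would give `t (k + 1) = t k + t 0 - 1 = t k`
  have hnotinj : ¬ Function.Injective t := by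
    intro hinj
    obtain ⟨k, hk⟩ := Finite.injective_iff_surjective.mp hinj 0
    have hk1 : t (k + 1) = t (k + 0) := by rw [ht.add_one_eq h0, hk, h0, add_zero, hk]; ring
    exact one_ne_zero (add_left_cancel (hinj hk1))
  obtain ⟨a, b, hab, hne⟩ := Function.not_injective_iff.mp hnotinj
  have hshift : ∀ k, t (a + k) = t (b + k) := ZMod.induction_on_add_one (by simpa using hab)
    fun k ih => by rw [← add_assoc, ← add_assoc, ht.add_one_eq h0, ht.add_one_eq h0, ih]
  refine ⟨b - a, sub_ne_zero.mpr hne.symm, fun j => ?_⟩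
  calc t (j + (b - a)) = t (b + (j - a)) := by ring_nf
    _ = t j := by rw [← hshift]; ring_nf

theorem eq_one_of_prime {p : ℕ} [Fact p.Prime] {v : ZMod p → ZMod p}
    (hv : IsCycleTranslation v) (h0 : v 0 = 1) (x : ZMod p) : v x = 1 := by
  obtain ⟨m, hm, hper⟩ := hv.exists_periodic h0
  have hx : x = x * m⁻¹ * m := by field_simp
  rw [hx, (hper.zmod_mul _).eq, h0]

theorem periodic_natCast {p : ℕ} (hp : p.Prime) {t : ZMod (p ^ 2) → ZMod (p ^ 2)}
    (ht : IsCycleTranslation t) (h0 : t 0 = 1) : Function.Periodic t p := by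
  have : Fact (1 < p ^ 2) := ⟨Nat.one_lt_pow two_ne_zero hp.one_lt⟩
  obtain ⟨m, hm, hper⟩ := ht.exists_periodic h0
  obtain ⟨k, hk⟩ := exists_mul_eq_natCast_of_ne_zero hp hm
  exact hk ▸ hper.zmod_mul k

theorem exists_eq_one_add_mul {p : ℕ} (hp : p.Prime) {t : ZMod (p ^ 2) → ZMod (p ^ 2)}
    (ht : IsCycleTranslation t) (h0 : t 0 = 1) :
    ∃ c, reduceMod p c = 0 ∧ ∀ a, t a = 1 + c * a := by
  have : Fact p.Prime := ⟨hp⟩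
  have hper : ∀ w, Function.Periodic t (p * w) := fun w =>
    mul_comm w (p : ZMod (p ^ 2)) ▸ (ht.periodic_natCast hp h0).zmod_mul w
  have hlift : ∀ a, t ((reduceMod p a).val : ZMod (p ^ 2)) = t a := fun a => by
    obtain ⟨w, hw⟩ := exists_eq_natCast_val_reduceMod_add a
    exact (hper w _).symm.trans (congrArg t hw.symm)
  -- `t` descends to a cycle translation of `ZMod p` fixing `t 0 = 1`, which must be constant
  set v : ZMod p → ZMod p := fun x => reduceMod p (t (x.val : ZMod (p ^ 2)))
  have hv : IsCycleTranslation v := ht.map (reduceMod p).toAddMonoidHom reduceMod_surjective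
    fun a => (congrArg (reduceMod p) (hlift a)).symm
  have hred : ∀ a, reduceMod p (t a - 1) = 0 := fun a => by
    rw [map_sub, map_one, ← hlift]
    exact sub_eq_zero.mpr (hv.eq_one_of_prime (by simp [v, h0]) (reduceMod p a))
  have htt : ∀ a, t (t a) = t 1 := fun a => by
    obtain ⟨w, hw⟩ := reduceMod_eq_zero_iff.mp (hred a)
    rw [sub_eq_iff_eq_add'] at hw
    rw [hw, hper]
  have hstep : ∀ a, t (a + 1) = t a + (t 1 - 1) := fun a => by
    rw [ht.add_one_eq h0, htt]
    ring
  exact ⟨t 1 - 1, hred 1, fun a => by rw [ZMod.eq_add_mul_of_add_one hstep a, h0, mul_comm]⟩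

end ZMod

end IsCycleTranslation

namespace CycleSet

variable {X : Type*}

def ofTranslation {A : Type*} [AddCommGroup A] (t : A → A) (ht : IsCycleTranslation t) :
    CycleSet A where
  σ a := Equiv.addRight (t a)
  cycl x y z := by simp only [Equiv.coe_addRight]; rw [add_assoc, ht x y, ← add_assoc]

def IsTranslationModel {A : Type*} [AddCommGroup A] (S : CycleSet X) (e : A ≃ X) (t : A → A) :
    Prop :=
  ∀ a b, S.σ (e a) (e b) = e (b + t a)

namespace IsTranslationModel

variable {A : Type*} [AddCommGroup A] {S : CycleSet X} {e : A ≃ X} {t : A → A}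

theorem isCycleTranslation (h : IsTranslationModel S e t) : IsCycleTranslation t := by
  intro a b
  have hcycl := S.cycl (e a) (e b) (e 0)
  rw [h, h, h, h, h, h] at hcycl
  simpa [add_assoc] using e.injective hcycl

theorem isomorphic (h : IsTranslationModel S e t) {T : CycleSet A}
    (hT : ∀ a, T.σ a = Equiv.addRight (t a)) : S.Isomorphic T := by
  refine ⟨e.symm, e.symm.bijective, fun x y => ?_⟩
  obtain ⟨a, rfl⟩ := e.surjective x
  obtain ⟨b, rfl⟩ := e.surjective y
  simp [h a b, hT]

theorem closure_range_eq_top (h : IsTranslationModel S e t) (htr : S.Transitive) :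
    AddSubgroup.closure (Set.range t) = ⊤ := by
  set H := AddSubgroup.closure (Set.range t)
  have hmove : ∀ g ∈ S.permGroup, ∀ a, e.symm (g (e a)) - a ∈ H := by
    intro g hg
    induction hg using Subgroup.closure_induction with
    | mem g hg =>
      obtain ⟨x, rfl⟩ := hg
      obtain ⟨c, rfl⟩ := e.surjective x
      intro a
      rw [h, e.symm_apply_apply, add_sub_cancel_left]
      exact AddSubgroup.subset_closure ⟨c, rfl⟩
    | one => simp
    | mul g g' _ _ ihg ihg' =>
      intro a
      simpa using add_mem (ihg (e.symm (g' (e a)))) (ihg' a)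
    | inv g _ ihg =>
      intro a
      simpa using neg_mem (ihg (e.symm (g⁻¹ (e a))))
  rw [AddSubgroup.eq_top_iff']
  intro b
  obtain ⟨g, hg, hgb⟩ := htr (e 0) (e b)
  simpa [hgb] using hmove g hg 0

theorem comp_affine {R : Type*} [CommRing R] {e : R ≃ X} {t : R → R}
    (h : IsTranslationModel S e t) (u : Rˣ) (a₀ : R) :
    IsTranslationModel S (((Units.mulLeft u).trans (Equiv.addRight a₀)).trans e)
      (fun a => ↑u⁻¹ * t (u * a + a₀)) := by
  intro a b
  simp only [Equiv.trans_apply, Units.mulLeft_apply, Equiv.coe_addRight]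
  rw [mul_add, ← mul_assoc, Units.mul_inv, one_mul, add_right_comm, h]

end IsTranslationModel

theorem exists_isTranslationModel [Finite X] [Nonempty X] (S : CycleSet X)
    (htr : S.Transitive) (hcyc : IsCyclic S.permGroup) :
    ∃ (n : ℕ) (e : ZMod n ≃ X) (t : ZMod n → ZMod n), IsTranslationModel S e t := by
  obtain ⟨γ, hγ⟩ := S.permGroup.isCyclic_iff_exists_zpowers_eq_top.mp hcyc
  obtain ⟨x₀⟩ := ‹Nonempty X›
  have horbit : ∀ y, y ∈ MulAction.orbit (Subgroup.zpowers γ) x₀ := fun y => by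
    obtain ⟨g, hg, rfl⟩ := htr x₀ y
    exact ⟨⟨g, hγ ▸ hg⟩, rfl⟩
  let e := (MulAction.orbitZPowersEquiv γ x₀).symm.trans (Equiv.subtypeUnivEquiv horbit)
  have he : ∀ k : ℤ, e k = (γ ^ k) x₀ := fun k => by
    simp only [e, Equiv.trans_apply, Equiv.subtypeUnivEquiv_apply,
      MulAction.orbitZPowersEquiv_symm_apply']
    rfl
  have hσ : ∀ x, ∃ k : ℤ, γ ^ k = S.σ x := fun x =>
    Subgroup.mem_zpowers_iff.mp (hγ ▸ Subgroup.subset_closure ⟨x, rfl⟩)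
  choose k hk using hσ
  refine ⟨_, e, fun a => (k (e a) : ZMod _), fun a b => ?_⟩
  rw [← ZMod.intCast_zmod_cast b, he, ← hk, ← Equiv.Perm.mul_apply, ← zpow_add, ← he]
  push_cast
  rw [add_comm]

theorem multipermLevel_one_of_forall_eq [Nontrivial X] {S : CycleSet X} {g : Equiv.Perm X}
    (h : ∀ x, S.σ x = g) : S.MultipermLevel 1 := by
  refine ⟨fun x y z => show S.σ x z = S.σ y z by rw [h, h], fun k hk hall => ?_⟩
  obtain rfl : k = 0 := by omega
  obtain ⟨x, y, hxy⟩ := exists_pair_ne X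
  exact hxy (hall x y)

theorem multipermLevel_two_of_affine {R : Type*} [CommRing R] {T : CycleSet R} {c : R}
    (hc : c * c = 0) (hc0 : c ≠ 0) (hT : ∀ i, T.σ i = Equiv.addRight (1 + c * i)) :
    T.MultipermLevel 2 := by
  have : Nontrivial R := ⟨⟨c, 0, hc0⟩⟩
  refine ⟨fun x y z w => ?_, fun k hk hall => ?_⟩
  · change T.σ (T.σ x z) w = T.σ (T.σ y z) w
    simp only [hT, Equiv.coe_addRight]
    linear_combination (x - y) * hc
  · interval_cases k
    · exact zero_ne_one (hall 0 1)
    · have h : T.σ 0 0 = T.σ 1 0 := hall 0 1 0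
      simp only [hT, Equiv.coe_addRight] at h
      exact hc0 (by linear_combination -h)

theorem eq_of_isomorphic_affine {n : ℕ} [NeZero n] {S T : CycleSet (ZMod n)} {c c' : ZMod n}
    (hS : ∀ i, S.σ i = Equiv.addRight (1 + c * i))
    (hT : ∀ i, T.σ i = Equiv.addRight (1 + c' * i)) (hc' : c' * c' = 0)
    (h : S.Isomorphic T) : c = c' := by
  obtain ⟨F, -, hF⟩ := h
  simp only [hS, hT, Equiv.coe_addRight] at hF
  -- `F` is affine with slope `1 + c' * F 0`, a unit since `c'` squares to zero
  have haff := ZMod.eq_add_mul_of_add_one (f := F) (A := 1 + c' * F 0)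
    (fun y => by simpa using hF 0 y)
  have h1 := hF 1 0
  rw [haff (0 + _), haff 1] at h1
  linear_combination (1 - c' * F 0) * h1 + (c - c') * F 0 ^ 2 * hc'

theorem exists_affine_model {p : ℕ} (hp : p.Prime) (S : CycleSet X)
    (hcard : Nat.card X = p ^ 2) (htr : S.Transitive) (hcyc : IsCyclic S.permGroup) :
    ∃ c : ZMod (p ^ 2), reduceMod p c = 0 ∧
      ∃ e : ZMod (p ^ 2) ≃ X, S.IsTranslationModel e (fun a => 1 + c * a) := by
  have : Fact p.Prime := ⟨hp⟩
  obtain ⟨_, _⟩ := Nat.card_ne_zero.mp (hcard ▸ pow_ne_zero 2 hp.ne_zero)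
  obtain ⟨n, e, t, he⟩ := S.exists_isTranslationModel htr hcyc
  obtain rfl : n = p ^ 2 := by rw [← hcard, ← Nat.card_congr e, Nat.card_zmod]
  obtain ⟨a₀, ha₀⟩ : ∃ a₀, reduceMod p (t a₀) ≠ 0 := by
    by_contra! hker
    have hle : AddSubgroup.closure (Set.range t) ≤ (reduceMod p).toAddMonoidHom.ker :=
      (AddSubgroup.closure_le _).mpr (Set.range_subset_iff.mpr hker)
    rw [he.closure_range_eq_top htr, top_le_iff, AddSubgroup.eq_top_iff'] at hle
    simpa using hle 1
  set u := (isUnit_of_reduceMod_ne_zero hp ha₀).unit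
  have hmodel := he.comp_affine u a₀
  obtain ⟨c, hc, ht⟩ := hmodel.isCycleTranslation.exists_eq_one_add_mul hp (by simp [u])
  exact ⟨c, hc, _, funext ht ▸ hmodel⟩

end CycleSet

def linearFin {p : ℕ} [NeZero p] (d x : ZMod p) : Fin p :=
  ⟨(d * x).val, ZMod.val_lt _⟩

def shiftCoeff (p : ℕ) (f : ZMod p → Fin p) : ZMod (p ^ 2) :=
  p * (f 1).val

section GoodMaps

variable {p : ℕ}

theorem natCast_val_linearFin [NeZero p] (d x : ZMod p) :
    ((linearFin d x).val : ZMod p) = d * x :=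
  ZMod.natCast_zmod_val _

theorem good_linearFin [Fact p.Prime] {d : ZMod p} (hd : d ≠ 0) : Good p (linearFin d) := by
  refine ⟨?_, by simp [linearFin], fun i j => by simp only [natCast_val_linearFin]; ring⟩
  have hinj : Function.Injective (linearFin d) := fun x y hxy =>
    mul_left_cancel₀ hd (ZMod.val_injective _ (congrArg Fin.val hxy))
  exact (Fintype.bijective_iff_injective_and_card _).mpr ⟨hinj, by simp⟩

namespace Good

variable {f g : ZMod p → Fin p}

theorem natCast_val_apply [NeZero p] (hf : Good p f) (x : ZMod p) :
    ((f x).val : ZMod p) = (f 1).val * x := by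
  have hlin := ZMod.eq_add_mul_of_add_one (f := fun x => ((f x).val : ZMod p)) (A := (f 1).val)
    (fun y => by
      have h := hf.2.2 0 y
      rw [zero_add, hf.2.1, Nat.cast_zero] at h
      linear_combination -h) x
  rwa [hf.2.1, Nat.cast_zero, zero_add, mul_comm] at hlin

theorem eq_linearFin [NeZero p] (hf : Good p f) : f = linearFin ((f 1).val : ZMod p) := by
  funext x
  apply Fin.ext
  show (f x).val = (((f 1).val : ZMod p) * x).val
  rw [← hf.natCast_val_apply, ZMod.val_natCast_of_lt (f x).isLt]

theorem natCast_val_one_ne_zero [Fact p.Prime] (hf : Good p f) : ((f 1).val : ZMod p) ≠ 0 := by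
  rw [Ne, ZMod.natCast_eq_zero_iff]
  intro hdvd
  have h10 : f 1 = f 0 := Fin.ext (by rw [hf.2.1]; exact Nat.eq_zero_of_dvd_of_lt hdvd (f 1).isLt)
  exact one_ne_zero (hf.1.1 h10)

theorem shiftPerm_eq [NeZero p] (hf : Good p f) (i : ZMod (p ^ 2)) :
    shiftPerm p f i = Equiv.addRight (1 + shiftCoeff p f * i) := by
  rw [shiftPerm, shiftCoeff, mul_assoc]
  congr 2
  rw [natCast_mul_eq_natCast_mul_iff, map_natCast, map_mul, map_natCast, hf.natCast_val_apply,
    reduceMod_apply]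

theorem shiftCoeff_ne_zero [Fact p.Prime] (hf : Good p f) : shiftCoeff p f ≠ 0 := by
  rw [shiftCoeff, Ne, natCast_mul_eq_zero_iff, map_natCast]
  exact hf.natCast_val_one_ne_zero

theorem eq_of_shiftCoeff_eq [NeZero p] (hf : Good p f) (hg : Good p g)
    (h : shiftCoeff p f = shiftCoeff p g) : f = g := by
  rw [shiftCoeff, shiftCoeff, natCast_mul_eq_natCast_mul_iff, map_natCast, map_natCast] at h
  rw [hf.eq_linearFin, hg.eq_linearFin, h]

end Good

theorem exists_good_shiftCoeff_eq [Fact p.Prime] {c : ZMod (p ^ 2)} (hc : reduceMod p c = 0)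
    (hc0 : c ≠ 0) :
    ∃ f, Good p f ∧ shiftCoeff p f = c := by
  obtain ⟨w, rfl⟩ := reduceMod_eq_zero_iff.mp hc
  have hw : reduceMod p w ≠ 0 := fun h => hc0 (natCast_mul_eq_zero_iff.mpr h)
  refine ⟨linearFin (reduceMod p w), good_linearFin hw, ?_⟩
  rw [shiftCoeff, natCast_mul_eq_natCast_mul_iff, map_natCast, natCast_val_linearFin, mul_one]

def goodEquiv [Fact p.Prime] : {f : ZMod p → Fin p // Good p f} ≃ {d : ZMod p // d ≠ 0} where
  toFun f := ⟨(f.1 1).val, f.2.natCast_val_one_ne_zero⟩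
  invFun d := ⟨linearFin d.1, good_linearFin d.2⟩
  left_inv f := Subtype.ext f.2.eq_linearFin.symm
  right_inv d := Subtype.ext (by simp [natCast_val_linearFin])

theorem card_good [Fact p.Prime] : Nat.card {f : ZMod p → Fin p // Good p f} = p - 1 := by
  rw [Nat.card_congr goodEquiv, Nat.card_eq_fintype_card, Fintype.card_subtype_compl, ZMod.card,
    Fintype.card_subtype_eq]

end GoodMaps

/-- Classification: up to isomorphism there are exactly `p` indecomposable
cycle sets of cardinality `p^2` with cyclic permutation group: one of level 1
(`i*j = j+1` on `Z/p^2Z`) and `p-1` of level 2 coming from `Good` maps. -/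
theorem stmt11 (p : ℕ) (hp : p.Prime) :
    (∀ (X : Type) (S : CycleSet X), Nat.card X = p ^ 2 → S.Transitive →
      IsCyclic S.permGroup →
        (∃ T : CycleSet (ZMod (p ^ 2)),
          (∀ i, T.σ i = Equiv.addRight (1 : ZMod (p ^ 2))) ∧ S.Isomorphic T) ∨
        (∃ f : ZMod p → Fin p, Good p f ∧
          ∃ T : CycleSet (ZMod (p ^ 2)),
            (∀ i, T.σ i = shiftPerm p f i) ∧ S.Isomorphic T)) ∧
    (∀ T : CycleSet (ZMod (p ^ 2)),
      (∀ i, T.σ i = Equiv.addRight (1 : ZMod (p ^ 2))) → T.MultipermLevel 1) ∧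
    (∀ (f : ZMod p → Fin p), Good p f → ∀ T : CycleSet (ZMod (p ^ 2)),
      (∀ i, T.σ i = shiftPerm p f i) → T.MultipermLevel 2) ∧
    (∀ (f g : ZMod p → Fin p), Good p f → Good p g →
      ∀ S T : CycleSet (ZMod (p ^ 2)),
        (∀ i, S.σ i = shiftPerm p f i) → (∀ i, T.σ i = shiftPerm p g i) →
          (S.Isomorphic T ↔ f = g)) ∧
    (∀ (f : ZMod p → Fin p), Good p f → ∀ S T : CycleSet (ZMod (p ^ 2)),
      (∀ i, S.σ i = Equiv.addRight (1 : ZMod (p ^ 2))) →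
        (∀ i, T.σ i = shiftPerm p f i) → ¬ S.Isomorphic T) ∧
    Nat.card {f : ZMod p → Fin p // Good p f} = p - 1 := by
  have : Fact p.Prime := ⟨hp⟩
  have : Fact (1 < p ^ 2) := ⟨Nat.one_lt_pow two_ne_zero hp.one_lt⟩
  have hsq : ∀ f, shiftCoeff p f * shiftCoeff p f = 0 := fun f =>
    mul_self_eq_zero_of_reduceMod_eq_zero (by simp [shiftCoeff])
  refine ⟨fun X S hcard htr hcyc => ?_, fun T hT => CycleSet.multipermLevel_one_of_forall_eq hT,
    fun f hf T hT => ?_, fun f g hf hg S T hS hT => ⟨fun h => ?_, fun hfg => ?_⟩,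
    fun f hf S T hS hT h => ?_, card_good⟩
  · obtain ⟨c, hc, e, he⟩ := S.exists_affine_model hp hcard htr hcyc
    rcases eq_or_ne c 0 with rfl | hc0
    · exact Or.inl ⟨CycleSet.ofTranslation _ (IsCycleTranslation.one_add_mul (zero_mul 0)),
        fun i => by simp [CycleSet.ofTranslation], he.isomorphic fun _ => rfl⟩
    · obtain ⟨f, hf, rfl⟩ := exists_good_shiftCoeff_eq hc hc0
      exact Or.inr ⟨f, hf, CycleSet.ofTranslation _ (IsCycleTranslation.one_add_mul (hsq f)),
        fun i => (hf.shiftPerm_eq i).symm, he.isomorphic fun _ => rfl⟩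
  · exact CycleSet.multipermLevel_two_of_affine (hsq f) hf.shiftCoeff_ne_zero
      fun i => (hT i).trans (hf.shiftPerm_eq i)
  · exact hf.eq_of_shiftCoeff_eq hg <| CycleSet.eq_of_isomorphic_affine
      (fun i => (hS i).trans (hf.shiftPerm_eq i)) (fun i => (hT i).trans (hg.shiftPerm_eq i))
      (hsq g) h
  · exact ⟨id, Function.bijective_id, fun x y => by simp [hS, hT, hfg]⟩
  · exact hf.shiftCoeff_ne_zero <| Eq.symm <| CycleSet.eq_of_isomorphic_affine
      (fun i => by simp [hS]) (fun i => (hT i).trans (hf.shiftPerm_eq i)) (hsq f) h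
end

section
/- Let p be a prime and α a p-cycle in Sym(Z/pZ). The operation on Z/pZ × Z/pZ given by (a,i)·(b,j) := (b+1, α^a(j)) makes Z/pZ × Z/pZ an indecomposable cycle set whose permutation group is isomorphic to Z/pZ × Z/pZ. -/
/-- For a `p`-cycle `α` of `Sym(Z/pZ)`, the operation
`(a,i)·(b,j) = (b+1, α^a j)` makes `Z/pZ × Z/pZ` an indecomposable cycle set
whose permutation group is isomorphic to `Z/pZ × Z/pZ`. -/
theorem stmt14 (p : ℕ) (hp : p.Prime) (α : Equiv.Perm (ZMod p))
    (hα : α.IsCycle ∧ orderOf α = p) :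
    ∃ S : CycleSet (ZMod p × ZMod p),
      (∀ a i b j : ZMod p, S.σ (a, i) (b, j) = (b + 1, (α ^ a.val) j)) ∧
        S.Transitive ∧
        Nonempty (S.permGroup ≃* Multiplicative (ZMod p × ZMod p)) := by
  haveI : Fact p.Prime := ⟨hp⟩
  haveI : NeZero p := ⟨hp.ne_zero⟩
  obtain ⟨hc, ho⟩ := hα
  have hpow : ∀ m n : ZMod p, α ^ (m + n).val = α ^ m.val * α ^ n.val := by
    intro m n
    rw [← pow_add, ZMod.val_add]
    conv_rhs => rw [← pow_mod_orderOf, ho]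
  -- the monoid hom
  set φ : Multiplicative (ZMod p × ZMod p) →* Equiv.Perm (ZMod p × ZMod p) :=
    { toFun := fun x => Equiv.prodCongr (Equiv.addRight x.toAdd.1) (α ^ x.toAdd.2.val)
      map_one' := by
        ext ⟨b, j⟩ <;> simp [ZMod.val_zero]
      map_mul' := by
        intro x y
        ext ⟨b, j⟩ <;>
          simp [Equiv.Perm.mul_apply, hpow, add_comm, add_assoc, add_left_comm] } with hφ
  have φapp : ∀ (k m b j : ZMod p),
      φ (Multiplicative.ofAdd (k, m)) (b, j) = (b + k, (α ^ m.val) j) := by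
    intro k m b j; rfl
  have key : ∀ a b : ZMod p, (α ^ (b + 1).val) * α ^ a.val
      = (α ^ (a + 1).val) * α ^ b.val := by
    intro a b
    rw [← hpow, ← hpow]
    ring_nf
  set S : CycleSet (ZMod p × ZMod p) :=
    { σ := fun x => φ (Multiplicative.ofAdd (1, x.1))
      cycl := by
        rintro ⟨a, i⟩ ⟨b, j⟩ ⟨c, k⟩
        have := congrArg (fun g => g k) (key a b)
        simp only [Equiv.Perm.mul_apply] at this
        simpa [φapp] using this } with hS
  have hσ : ∀ a i b j : ZMod p, S.σ (a, i) (b, j) = (b + 1, (α ^ a.val) j) := by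
    intro a i b j; rfl
  -- injectivity of φ
  have hinj : Function.Injective φ := by
    rw [injective_iff_map_eq_one]
    rintro ⟨k, m⟩ h
    have h0 : ∀ b j : ZMod p, (b + k, (α ^ m.val) j) = (b, j) :=
      fun b j => congrArg (fun g => g (b, j)) h
    have hk : k = 0 := by
      have := congrArg Prod.fst (h0 0 0); simpa using this
    have hm1 : α ^ m.val = 1 := by
      ext j
      have := congrArg Prod.snd (h0 0 j); simpa using this
    have hdvd : orderOf α ∣ m.val := orderOf_dvd_of_pow_eq_one hm1
    rw [ho] at hdvd
    have hm : m = 0 := by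
      rcases Nat.eq_zero_of_dvd_of_lt hdvd (ZMod.val_lt m) |>.symm ▸ (ZMod.val_eq_zero m) with ⟨h1, -⟩
      exact h1 rfl
    simp [hk, hm]
    rfl
  -- permGroup = range φ
  have hrange : S.permGroup = φ.range := by
    apply le_antisymm
    · apply Subgroup.closure_le _ |>.2
      rintro g ⟨x, rfl⟩
      exact ⟨Multiplicative.ofAdd (1, x.1), rfl⟩
    · rintro g ⟨y, rfl⟩
      obtain ⟨k, m⟩ := y
      have hdec : φ (Multiplicative.ofAdd (k, m))
          = φ (Multiplicative.ofAdd ((1 : ZMod p), m))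
            * (φ (Multiplicative.ofAdd ((1 : ZMod p), (0 : ZMod p)))) ^ ((k.val : ℤ) - 1) := by
        rw [← map_zpow, ← map_mul, ← ofAdd_zsmul, ← ofAdd_add]
        refine congrArg _ (Prod.ext ?_ ?_)
        · show k = 1 + ((k.val : ℤ) - 1) • (1 : ZMod p)
          simp [zsmul_eq_mul, ZMod.natCast_val, ZMod.cast_id]
        · show m = m + ((k.val : ℤ) - 1) • (0 : ZMod p)
          simp
      show φ (Multiplicative.ofAdd (k, m)) ∈ S.permGroup
      rw [hdec]
      have h1 : φ (Multiplicative.ofAdd ((1 : ZMod p), m)) ∈ S.permGroup :=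
        Subgroup.subset_closure ⟨(m, 0), rfl⟩
      have h2 : φ (Multiplicative.ofAdd ((1 : ZMod p), (0 : ZMod p))) ∈ S.permGroup :=
        Subgroup.subset_closure ⟨((0 : ZMod p), 0), rfl⟩
      exact mul_mem h1 (Subgroup.zpow_mem _ h2 _)
  -- transitivity
  have hsupp : ∀ x : ZMod p, α x ≠ x := by
    intro x
    have hcard : α.support.card = p := by
      have h' := hc.orderOf
      rw [ho] at h'
      exact h'.symm
    have : α.support = Finset.univ :=
      Finset.eq_univ_of_card _ (by rw [hcard, ZMod.card])
    have hx : x ∈ α.support := this ▸ Finset.mem_univ x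
    exact Equiv.Perm.mem_support.1 hx
  have htrans : S.Transitive := by
    rintro ⟨a, i⟩ ⟨b, j⟩
    obtain ⟨x, -, hx⟩ := hc
    have hsc : α.SameCycle i j := ((hx (hsupp i)).symm).trans (hx (hsupp j))
    obtain ⟨n, -, -, hn⟩ := Equiv.Perm.SameCycle.exists_pow_eq α hsc
    refine ⟨φ (Multiplicative.ofAdd (b - a, (n : ZMod p))), hrange ▸ ⟨_, rfl⟩, ?_⟩
    rw [φapp]
    have : α ^ ((n : ZMod p)).val = α ^ n := by
      rw [ZMod.val_natCast]
      conv_rhs => rw [← pow_mod_orderOf, ho]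
    rw [this]
    simp [hn]
  exact ⟨S, hσ, htrans,
    ⟨(MulEquiv.subgroupCongr hrange).trans (MonoidHom.ofInjective hinj).symm⟩⟩
end

section
/- Let p, q be distinct primes. Every indecomposable cycle set of cardinality pq with abelian permutation group is isomorphic to (Z/pqZ, ·) with i·j = j+1, whose permutation group is cyclic of order pq. -/
/-!
Since `permGroup` is abelian and transitive it acts regularly, so fixing `e : X` identifies `X`
with `G = permGroup` and turns every `σ x` into a translation: the cycle set becomes a map
`s : G → G` with `s (s g * h) * s g = s (s h * g) * s h` whose image generates `G`.
Let `K` be the group of periods of `s`. Equal values of `s` stay equal after translating by any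
`s g`, hence by all of `G`, so `s g = s h` forces `g⁻¹ * h ∈ K`; a bijective `s` is constant `1`,
so `K ≠ ⊥`, and `s` is constant when `|G|` is prime. If `K` has prime index, the map induced by
`s` on `G ⧸ K` is therefore constant, i.e. `s` is constant modulo `K`; then translating by
`a = s 1` multiplies `s` by a constant `c ∈ K` with `c ^ [G : K] = 1`, so `c = 1` as `|K|` and
`[G : K]` are coprime, and `K` contains all the generators `s g`. Hence for `|G| = pq` all `σ x`
equal one permutation `π`, which generates the cyclic group `G` of order `pq`, and `k ↦ π ^ k e`
identifies `ZMod (p * q)` with `X`.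
-/

/-- The cycle-set identity for `x · y = s x * y`: cycle sets on a group whose left
multiplications are translations. -/
def IsCycleMap {G : Type*} [Mul G] (s : G → G) : Prop :=
  ∀ g h, s (s g * h) * s g = s (s h * g) * s h

namespace CycleMap

variable {G : Type*} [CommGroup G] {s : G → G}

def periods (s : G → G) : Subgroup G where
  carrier := {k | ∀ g, s (g * k) = s g}
  one_mem' g := by rw [mul_one]
  mul_mem' {k l} hk hl g := by rw [← mul_assoc, hl, hk]
  inv_mem' {k} hk g := by rw [← hk (g * k⁻¹), inv_mul_cancel_right]

theorem map_mul_eq_map_mul (hs : IsCycleMap s) {x y : G} (hxy : s x = s y) (g : G) :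
    s (s g * x) = s (s g * y) :=
  mul_right_cancel <| (hs g x).trans <| by rw [hxy, hs g y]

theorem inv_mul_mem_periods_of_map_eq [Finite G] (hs : IsCycleMap s)
    (hgen : Subgroup.closure (Set.range s) = ⊤) {x y : G} (hxy : s x = s y) :
    x⁻¹ * y ∈ periods s := by
  let M : Submonoid G :=
    { carrier := {t | ∀ x y, s x = s y → s (t * x) = s (t * y)}
      one_mem' := by simp
      mul_mem' := fun ht hu x y hxy => by simpa only [mul_assoc] using ht _ _ (hu x y hxy) }
  have hM : M = ⊤ := by
    rw [eq_top_iff, ← Subgroup.top_toSubmonoid, ← hgen, Subgroup.closure_toSubmonoid_of_finite,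
      Submonoid.closure_le]
    rintro _ ⟨g, rfl⟩ x y hxy
    simpa only [mul_assoc] using map_mul_eq_map_mul hs hxy g
  intro g
  have := (hM ▸ Submonoid.mem_top (g * x⁻¹) : g * x⁻¹ ∈ M) x y hxy
  rwa [inv_mul_cancel_right, eq_comm, mul_assoc] at this

theorem eq_one_of_bijective (hs : IsCycleMap s) (hbij : Function.Bijective s) (g : G) :
    s g = 1 := by
  obtain ⟨h, hh⟩ := hbij.2 1
  have : s (s g * h) * s g = s h * s g := by rw [hs, hh]; simp only [one_mul, mul_one]
  simpa [hh] using hbij.1 (mul_right_cancel this)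

theorem periods_ne_bot [Finite G] [Nontrivial G] (hs : IsCycleMap s)
    (hgen : Subgroup.closure (Set.range s) = ⊤) : periods s ≠ ⊥ := by
  intro hbot
  have hinj : Function.Injective s := fun x y hxy => by
    simpa [hbot, inv_mul_eq_one] using inv_mul_mem_periods_of_map_eq hs hgen hxy
  obtain ⟨x, y, hxy⟩ := exists_pair_ne G
  have hbij := Finite.injective_iff_bijective.mp hinj
  exact hxy (hinj ((eq_one_of_bijective hs hbij x).trans (eq_one_of_bijective hs hbij y).symm))

theorem periods_eq_top_of_card_prime (hs : IsCycleMap s)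
    (hgen : Subgroup.closure (Set.range s) = ⊤) (hG : (Nat.card G).Prime) : periods s = ⊤ := by
  have : Finite G := Nat.finite_of_card_ne_zero hG.ne_zero
  have : Nontrivial G := Finite.one_lt_card_iff_nontrivial.mp hG.one_lt
  have : Fact (Nat.card G).Prime := ⟨hG⟩
  exact (periods s).eq_bot_or_eq_top_of_prime_card.resolve_left (periods_ne_bot hs hgen)

def retraction (s : G → G) : G ⧸ periods s → G ⧸ periods s :=
  Quotient.map' s fun x y hxy => by
    rw [QuotientGroup.leftRel_apply] at hxy ⊢
    rw [← mul_inv_cancel_left x y, hxy x, inv_mul_cancel]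
    exact one_mem _

@[simp]
theorem retraction_mk (g : G) : retraction s (g : G ⧸ periods s) = (s g : G ⧸ periods s) := rfl

theorem isCycleMap_retraction (hs : IsCycleMap s) : IsCycleMap (retraction s) := by
  intro a b
  induction a using QuotientGroup.induction_on with | H g =>
  induction b using QuotientGroup.induction_on with | H h =>
  simpa only [retraction_mk, ← QuotientGroup.mk_mul] using congrArg QuotientGroup.mk (hs g h)

theorem closure_range_retraction (hgen : Subgroup.closure (Set.range s) = ⊤) :
    Subgroup.closure (Set.range (retraction s)) = ⊤ := by
  have : Set.range (retraction s) = QuotientGroup.mk' (periods s) '' Set.range s := by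
    rw [← Set.range_comp, ← (QuotientGroup.mk'_surjective _).range_comp]
    rfl
  rw [this, ← MonoidHom.map_closure, hgen, Subgroup.map_top_of_surjective _
    (QuotientGroup.mk'_surjective _)]

theorem map_map_mul_eq (hconst : ∀ g, (s 1)⁻¹ * s g ∈ periods s) (g h : G) :
    s (s g * h) = s (s 1 * h) := by
  rw [← hconst g (s 1 * h), mul_right_comm, mul_inv_cancel_left]

theorem map_pow_mul_eq (hs : IsCycleMap s) (hconst : ∀ g, (s 1)⁻¹ * s g ∈ periods s)
    (t : ℕ) (g : G) : s (s 1 ^ t * g) = ((s 1)⁻¹ * s (s 1)) ^ t * s g := by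
  have hstep (g : G) : s (s 1 * g) = (s 1)⁻¹ * s (s 1) * s g := by
    have := hs g 1
    rw [map_map_mul_eq hconst, mul_one] at this
    rw [mul_assoc, eq_inv_mul_iff_mul_eq, this, mul_comm]
  induction t generalizing g with
  | zero => simp
  | succ t ih => rw [pow_succ', mul_assoc, hstep, ih, pow_succ', mul_assoc ((s 1)⁻¹ * _)]

theorem periods_eq_top_of_coprime (hs : IsCycleMap s)
    (hgen : Subgroup.closure (Set.range s) = ⊤) (hconst : ∀ g, (s 1)⁻¹ * s g ∈ periods s)
    (hco : (periods s).index.Coprime (Nat.card (periods s))) : periods s = ⊤ := by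
  have hpow := map_pow_mul_eq hs hconst
  set c := (s 1)⁻¹ * s (s 1)
  have hc_index : c ^ (periods s).index = 1 := by
    have := hpow (periods s).index 1
    rwa [mul_one, ← one_mul (s 1 ^ _), (periods s).pow_index_mem (s 1) 1, eq_comm,
      mul_eq_right] at this
  have hc_card : c ^ Nat.card (periods s) = 1 :=
    orderOf_dvd_iff_pow_eq_one.mp (Subgroup.orderOf_dvd_natCard _ (hconst (s 1)))
  have hc : c = 1 := by
    rw [← orderOf_eq_one_iff, ← Nat.dvd_one, ← hco.gcd_eq_one]
    exact Nat.dvd_gcd (orderOf_dvd_of_pow_eq_one hc_index) (orderOf_dvd_of_pow_eq_one hc_card)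
  have h1 : s 1 ∈ periods s := fun g => by
    have := hpow 1 g
    simp only [pow_one, hc, one_mul] at this
    rwa [mul_comm]
  rw [eq_top_iff, ← hgen, Subgroup.closure_le]
  rintro _ ⟨g, rfl⟩
  simpa using mul_mem h1 (hconst g)

theorem periods_eq_top_of_index_prime (hs : IsCycleMap s)
    (hgen : Subgroup.closure (Set.range s) = ⊤) (hK : (periods s).index.Prime)
    (hco : (periods s).index.Coprime (Nat.card (periods s))) : periods s = ⊤ := by
  have hret := periods_eq_top_of_card_prime (isCycleMap_retraction hs) (closure_range_retraction hgen)
    ((periods s).index_eq_card ▸ hK)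
  refine periods_eq_top_of_coprime hs hgen (fun g => ?_) hco
  have := (hret ▸ Subgroup.mem_top (g : G ⧸ periods s) : _ ∈ periods (retraction s)) 1
  rwa [← QuotientGroup.mk_one, retraction_mk, ← QuotientGroup.mk_mul, one_mul, retraction_mk,
    eq_comm, QuotientGroup.eq] at this

theorem periods_eq_top_of_card_eq_prime_mul_prime (hs : IsCycleMap s)
    (hgen : Subgroup.closure (Set.range s) = ⊤) {p q : ℕ} (hp : p.Prime) (hq : q.Prime)
    (hpq : p ≠ q) (hcard : Nat.card G = p * q) : periods s = ⊤ := by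
  have hmul : Nat.card (periods s) * (periods s).index = p * q :=
    hcard ▸ (periods s).card_mul_index
  have hsq : Squarefree (p * q) := Nat.squarefree_mul_iff.mpr
    ⟨(Nat.coprime_primes hp hq).mpr hpq, hp.squarefree, hq.squarefree⟩
  have hco := (Nat.coprime_of_squarefree_mul (hmul ▸ hsq)).symm
  obtain ⟨a, b, ha, hb, hindex⟩ := Nat.dvd_mul.mp (Dvd.intro_left _ hmul)
  obtain rfl | rfl := hp.eq_one_or_self_of_dvd a ha <;>
    obtain rfl | rfl := hq.eq_one_or_self_of_dvd b hb
  · exact Subgroup.index_eq_one.mp hindex.symm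
  · exact periods_eq_top_of_index_prime hs hgen (by rwa [← hindex, one_mul]) hco
  · exact periods_eq_top_of_index_prime hs hgen (by rwa [← hindex, mul_one]) hco
  · have : Finite G := Nat.finite_of_card_ne_zero (hcard ▸ (Nat.mul_pos hp.pos hq.pos).ne')
    have : Nontrivial G := Finite.one_lt_card_iff_nontrivial.mp
      (hcard ▸ Nat.one_lt_mul_iff.mpr ⟨hp.pos, hq.pos, Or.inl hp.one_lt⟩)
    rw [← hindex, Nat.mul_eq_right (Nat.mul_pos hp.pos hq.pos).ne', Subgroup.card_eq_one] at hmul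
    exact absurd hmul (periods_ne_bot hs hgen)

end CycleMap

theorem orderOf_addRight_one (n : ℕ) : orderOf (Equiv.addRight (1 : ZMod n)) = n := by
  have key (k : ℕ) : Equiv.addRight (1 : ZMod n) ^ k = 1 ↔ n ∣ k := by
    rw [Equiv.nsmul_addRight, nsmul_eq_mul, mul_one, ← ZMod.natCast_eq_zero_iff]
    exact ⟨fun h => by simpa using Equiv.congr_fun h 0, fun h => by rw [h, Equiv.addRight_zero]⟩
  exact Nat.dvd_antisymm (orderOf_dvd_of_pow_eq_one ((key n).2 dvd_rfl))
    ((key _).1 (pow_orderOf_eq_one _))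

theorem exists_bijective_map_perm_eq_add_one {X : Type*} [Finite X] (π : Equiv.Perm X) (e : X)
    {n : ℕ} [NeZero n] (hn : Nat.card X = n) (hper : Function.minimalPeriod π e = n) :
    ∃ F : X → ZMod n, Function.Bijective F ∧ ∀ y, F (π y) = F y + 1 := by
  let φ : ZMod n → X := fun k => π^[k.val] e
  have hφ_add_one (k : ZMod n) : φ (k + 1) = π (φ k) := by
    simp only [φ, ZMod.val_add, ZMod.val_one_eq_one_mod, Nat.add_mod_mod, ← hper,
      Function.iterate_mod_minimalPeriod_eq, Function.iterate_succ_apply']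
  have hφ_inj : Function.Injective φ := fun a b hab => ZMod.val_injective n <|
    (Function.iterate_eq_iterate_iff_of_lt_minimalPeriod (hper ▸ a.val_lt)
      (hper ▸ b.val_lt)).mp hab
  have hφ : Function.Bijective φ := hφ_inj.bijective_of_nat_card_le (by rw [hn, Nat.card_zmod])
  refine ⟨(Equiv.ofBijective φ hφ).symm, (Equiv.ofBijective φ hφ).symm.bijective, fun y => ?_⟩
  obtain ⟨k, rfl⟩ := hφ.2 y
  rw [← hφ_add_one, Equiv.ofBijective_symm_apply_apply, Equiv.ofBijective_symm_apply_apply]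

namespace CycleSet

variable {X : Type*} {S : CycleSet X}

theorem σ_mem_permGroup (S : CycleSet X) (x : X) : S.σ x ∈ S.permGroup :=
  Subgroup.subset_closure ⟨x, rfl⟩

theorem eq_one_of_apply_eq (htr : S.Transitive) (hab : S.AbelianPerm) {g : Equiv.Perm X}
    (hg : g ∈ S.permGroup) {x : X} (hx : g x = x) : g = 1 := by
  ext y
  obtain ⟨h, hh, rfl⟩ := htr x y
  rw [← Equiv.Perm.mul_apply, hab g hg h hh, Equiv.Perm.mul_apply, hx, Equiv.Perm.one_apply]

abbrev permGroupCommGroup (hab : S.AbelianPerm) : CommGroup S.permGroup :=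
  { S.permGroup.toGroup with mul_comm := fun g h => Subtype.ext (hab g g.2 h h.2) }

theorem bijective_apply_permGroup (htr : S.Transitive) (hab : S.AbelianPerm) (e : X) :
    Function.Bijective fun g : S.permGroup => (g : Equiv.Perm X) e := by
  refine ⟨fun g h (hgh : (g : Equiv.Perm X) e = (h : Equiv.Perm X) e) => ?_, fun x => ?_⟩
  · have : ((h⁻¹ * g : S.permGroup) : Equiv.Perm X) e = e := by simp [hgh]
    exact (inv_mul_eq_one.mp (Subtype.ext (eq_one_of_apply_eq htr hab (h⁻¹ * g).2 this))).symm
  · obtain ⟨g, hg, rfl⟩ := htr e x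
    exact ⟨⟨g, hg⟩, rfl⟩

theorem card_permGroup [Nonempty X] (htr : S.Transitive) (hab : S.AbelianPerm) :
    Nat.card S.permGroup = Nat.card X :=
  Nat.card_eq_of_bijective _ (bijective_apply_permGroup htr hab (Classical.arbitrary X))

/-- Under the regular action of `permGroup`, `x = g e` and the left multiplication `σ x`
becomes translation by `translationMap e g`. -/
def translationMap (S : CycleSet X) (e : X) : S.permGroup → S.permGroup :=
  fun g => ⟨S.σ ((g : Equiv.Perm X) e), S.σ_mem_permGroup _⟩

theorem isCycleMap_translationMap (e : X) : IsCycleMap (S.translationMap e) := by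
  intro g h
  ext w
  exact S.cycl _ _ w

theorem closure_range_translationMap (htr : S.Transitive) (hab : S.AbelianPerm) (e : X) :
    Subgroup.closure (Set.range (S.translationMap e)) = ⊤ := by
  have : Set.range (S.translationMap e) = (↑) ⁻¹' Set.range S.σ := by
    ext g
    refine ⟨fun ⟨h, hh⟩ => ⟨_, congrArg Subtype.val hh⟩, fun ⟨x, hx⟩ => ?_⟩
    obtain ⟨h, rfl⟩ := (bijective_apply_permGroup htr hab e).2 x
    exact ⟨h, Subtype.ext hx⟩
  rw [this]
  exact Subgroup.closure_closure_coe_preimage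

theorem exists_forall_σ_eq {p q : ℕ} (hp : p.Prime) (hq : q.Prime) (hpq : p ≠ q)
    (hcard : Nat.card X = p * q) (htr : S.Transitive) (hab : S.AbelianPerm) :
    ∃ π, ∀ x, S.σ x = π := by
  have : Nonempty X := (Nat.card_ne_zero.mp (hcard ▸ (Nat.mul_pos hp.pos hq.pos).ne')).1
  let e : X := Classical.arbitrary X
  let := permGroupCommGroup hab
  have hperiods := CycleMap.periods_eq_top_of_card_eq_prime_mul_prime
    (isCycleMap_translationMap e) (closure_range_translationMap htr hab e) hp hq hpq
    ((card_permGroup htr hab).trans hcard)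
  refine ⟨S.σ e, fun x => ?_⟩
  obtain ⟨g, rfl⟩ := (bijective_apply_permGroup htr hab e).2 x
  have := congrArg Subtype.val ((hperiods ▸ Subgroup.mem_top g : g ∈ CycleMap.periods _) 1)
  simpa [translationMap] using this

theorem permGroup_eq_zpowers [Nonempty X] {π : Equiv.Perm X} (hπ : ∀ x, S.σ x = π) :
    S.permGroup = Subgroup.zpowers π := by
  rw [permGroup, Subgroup.zpowers_eq_closure, funext hπ, Set.range_const]

theorem minimalPeriod_eq_orderOf (htr : S.Transitive) (hab : S.AbelianPerm)
    {g : Equiv.Perm X} (hg : g ∈ S.permGroup) (e : X) :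
    Function.minimalPeriod g e = orderOf g := by
  refine Nat.dvd_antisymm ?_ ?_
  · rw [← Function.isPeriodicPt_iff_minimalPeriod_dvd, Function.IsPeriodicPt, Function.IsFixedPt,
      Equiv.Perm.iterate_eq_pow, pow_orderOf_eq_one, Equiv.Perm.one_apply]
  · refine orderOf_dvd_of_pow_eq_one (eq_one_of_apply_eq htr hab (pow_mem hg _) (x := e) ?_)
    rw [← Equiv.Perm.iterate_eq_pow]
    exact Function.iterate_minimalPeriod

end CycleSet

/-- Every indecomposable cycle set of cardinality `pq` (`p ≠ q` primes) with
abelian permutation group is isomorphic to `Z/pqZ` with `i·j = j+1`, whose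
permutation group is cyclic of order `pq`. -/
theorem stmt17 {X : Type*} [Finite X] (S : CycleSet X) (p q : ℕ)
    (hp : p.Prime) (hq : q.Prime) (hpq : p ≠ q)
    (hcard : Nat.card X = p * q) (htr : S.Transitive) (hab : S.AbelianPerm) :
    ∃ T : CycleSet (ZMod (p * q)),
      (∀ i, T.σ i = Equiv.addRight (1 : ZMod (p * q))) ∧ S.Isomorphic T ∧
        IsCyclic T.permGroup ∧ Nat.card T.permGroup = p * q := by
  have : NeZero (p * q) := ⟨(Nat.mul_pos hp.pos hq.pos).ne'⟩
  have : Nonempty X := (Nat.card_ne_zero.mp (hcard ▸ NeZero.ne (p * q))).1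
  let e : X := Classical.arbitrary X
  obtain ⟨π, hπ⟩ := CycleSet.exists_forall_σ_eq hp hq hpq hcard htr hab
  have horder : orderOf π = p * q := by
    rw [← Nat.card_zpowers, ← CycleSet.permGroup_eq_zpowers hπ,
      CycleSet.card_permGroup htr hab, hcard]
  obtain ⟨F, hF, hFπ⟩ := exists_bijective_map_perm_eq_add_one π e hcard
    (horder ▸ CycleSet.minimalPeriod_eq_orderOf htr hab (hπ e ▸ S.σ_mem_permGroup e) e)
  let T : CycleSet (ZMod (p * q)) := ⟨fun _ => Equiv.addRight 1, fun _ _ _ => rfl⟩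
  have hT : T.permGroup = Subgroup.zpowers (Equiv.addRight 1) :=
    CycleSet.permGroup_eq_zpowers fun _ => rfl
  refine ⟨T, fun _ => rfl, ⟨F, hF, fun x y => by rw [hπ]; exact hFπ y⟩, hT ▸ inferInstance, ?_⟩
  rw [hT, Nat.card_zpowers, orderOf_addRight_one]
end

section
/- Let p be prime, X = {0,…,p^k−1}, and suppose functions f_1,…,f_{n−1} and exponents j_0 = k > j_1 > … > j_n = 0 are given as follows: f_i : Z/p^{j_i}Z → {0,…,p^{j_{i−1}−j_i}−1} with f_i(0)=0, such that each map φ_i(l) = 1 + p^{j_{n−1}} f_{n−1}(l) + … + p^{j_i} f_i(l) on {0,…,p^{j_i}−1} is injective. Define σ_i := ψ^{1+p^{j_{n−1}}f_{n−1}(i)+…+p^{j_1}f_1(i)} where ψ = (0 1 … p^k−1), and assume the symmetry condition Q_{i,j} ≡ Q_{j,i} (mod p^k) where K_{j,i} := j+1+p^{j_{n−1}}f_{n−1}(i)+…+p^{j_2}f_2(i) and Q_{j,i} := p^{j_{n−1}}f_{n−1}(i)+…+p^{j_1}f_1(i)+p^{j_{n−1}}f_{n−1}(K_{j,i})+…+p^{j_1}f_1(K_{j,i}).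 Then X with operation i·j := σ_i(j) is an indecomposable cycle set of multipermutational level n with cyclic permutation group ⟨ψ⟩ and |σ^i(X)| = p^{j_i} for all i ∈ {0,…,n}. -/
/-- Theorem 3.6 (construction): given a prime `p`, exponents
`k = j 0 > j 1 > … > j n = 0` (`n ≥ 2`) and functions
`f i : Z/p^{j i}Z → {0,…,p^{j(i-1)-j i}-1}` with `f i 0 = 0` such that each
truncated exponent map `φ i` is injective on `{0,…,p^{j i}-1}` and the
symmetry condition `Q a b ≡ Q b a (mod p^k)` holds, the operation
`i·j := ψ^{φ 1 i} j` (where `ψ : x ↦ x + 1` on `Z/p^kZ`) defines an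
indecomposable cycle set of multipermutational level `n` with cyclic
permutation group `⟨ψ⟩` and `|σ^i(X)| = p^{j i}` for all `i ≤ n`. -/
theorem stmt19 (p k n : ℕ) (hp : p.Prime) (hk : 1 ≤ k) (hn : 2 ≤ n)
    (j : ℕ → ℕ) (hj0 : j 0 = k) (hjn : j n = 0)
    (hjdec : ∀ i < n, j (i + 1) < j i)
    (f : ℕ → ℕ → ℕ)
    (hfmod : ∀ i, 1 ≤ i → i < n → ∀ l, f i l = f i (l % p ^ j i))
    (hfrange : ∀ i, 1 ≤ i → i < n → ∀ l, f i l < p ^ (j (i - 1) - j i))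
    (hf0 : ∀ i, 1 ≤ i → i < n → f i 0 = 0)
    (φ : ℕ → ℕ → ℕ)
    (hφ : ∀ b l, φ b l = 1 + ∑ t ∈ Finset.Ico b n, p ^ j t * f t l)
    (hφinj : ∀ i, 1 ≤ i → i < n → ∀ l l', l < p ^ j i → l' < p ^ j i →
      φ i l = φ i l' → l = l')
    (K Q : ℕ → ℕ → ℕ)
    (hK : ∀ a i, K a i = a + 1 + ∑ t ∈ Finset.Ico 2 n, p ^ j t * f t i)
    (hQ : ∀ a i, Q a i =
      (∑ t ∈ Finset.Ico 1 n, p ^ j t * f t i) +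
        ∑ t ∈ Finset.Ico 1 n, p ^ j t * f t (K a i))
    (hsym : ∀ a b, Q a b ≡ Q b a [MOD p ^ k]) :
    ∃ S : CycleSet (ZMod (p ^ k)),
      (∀ i : ZMod (p ^ k),
        S.σ i = (Equiv.addRight (1 : ZMod (p ^ k))) ^ (φ 1 i.val)) ∧
      S.Transitive ∧ S.MultipermLevel n ∧
      S.permGroup = Subgroup.zpowers (Equiv.addRight (1 : ZMod (p ^ k))) ∧
      ∀ i ≤ n, S.retCard i = p ^ j i := by

  have hp2 : 2 ≤ p := hp.two_le
  haveI : NeZero (p ^ k) := ⟨(pow_pos hp.pos k).ne'⟩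
  haveI : Fact (1 < p ^ k) := ⟨by
    have : p ≤ p ^ k := Nat.le_self_pow (by omega) p
    omega⟩
  -- basic facts about j
  have jmono : ∀ a b, a ≤ b → b ≤ n → j b ≤ j a := by
    intro a b hab hbn
    obtain ⟨d, rfl⟩ := Nat.exists_eq_add_of_le hab
    clear hab
    induction d with
    | zero => exact le_rfl
    | succ d ih =>
      have heq : a + (d + 1) = a + d + 1 := by omega
      rw [heq]
      have h1 : a + d < n := by omega
      have := hjdec (a + d) h1
      have := ih (by omega)
      omega
  have jpos : ∀ i, i < n → 1 ≤ j i := fun i h =>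
    Nat.lt_of_le_of_lt (Nat.zero_le _) (hjdec i h)
  have jlek : ∀ i, i ≤ n → j i ≤ k := fun i h => hj0 ▸ jmono 0 i (Nat.zero_le _) h
  have fcong : ∀ t l l', 1 ≤ t → t < n → l ≡ l' [MOD p ^ j t] → f t l = f t l' := by
    intro t l l' h1 h2 h
    rw [hfmod t h1 h2 l, hfmod t h1 h2 l']
    exact congrArg (f t) h
  have φcong : ∀ b l l', 1 ≤ b → b ≤ n → l ≡ l' [MOD p ^ j b] → φ b l = φ b l' := by
    intro b l l' h1 h2 h
    rw [hφ, hφ]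
    congr 1
    refine Finset.sum_congr rfl fun t ht => ?_
    obtain ⟨ht1, ht2⟩ := Finset.mem_Ico.mp ht
    have hd : p ^ j t ∣ p ^ j b := pow_dvd_pow p (jmono b t ht1 (le_of_lt ht2))
    rw [fcong t l l' (le_trans h1 ht1) ht2 (Nat.ModEq.of_dvd hd h)]
  have Φcong : ∀ l l', l ≡ l' [MOD p ^ k] → φ 1 l = φ 1 l' := by
    intro l l' h
    refine φcong 1 l l' le_rfl (by omega) (Nat.ModEq.of_dvd ?_ h)
    rw [← hj0]; exact pow_dvd_pow p (jmono 0 1 (Nat.zero_le _) (by omega))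
  have sumlt : ∀ d b l, 1 ≤ b → b + d = n →
      (∑ t ∈ Finset.Ico b n, p ^ j t * f t l) < p ^ j (b - 1) := by
    intro d
    induction d with
    | zero =>
      intro b l h1 h2
      subst h2
      simp [Finset.Ico_self, pow_pos hp.pos]
    | succ d ih =>
      intro b l h1 h2
      have hbn : b < n := by omega
      rw [Finset.sum_eq_sum_Ico_succ_bot hbn]
      have hih := ih (b + 1) l (by omega) (by omega)
      have hsub : (b + 1) - 1 = b := by omega
      rw [hsub] at hih
      have hfr : f b l < p ^ (j (b - 1) - j b) := hfrange b h1 hbn l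
      have hjb : j b ≤ j (b - 1) := by
        have : j ((b-1)+1) < j (b-1) := hjdec (b-1) (by omega)
        have hb : (b-1)+1 = b := by omega
        rw [hb] at this; omega
      have key : p ^ j b * f b l + p ^ j b ≤ p ^ j (b - 1) := by
        calc p ^ j b * f b l + p ^ j b = p ^ j b * (f b l + 1) := by ring
        _ ≤ p ^ j b * p ^ (j (b - 1) - j b) := by
            exact Nat.mul_le_mul_left _ (by omega)
        _ = p ^ j (b - 1) := by
            rw [← pow_add]
            congr 1
            omega
      omega
  have φlb : ∀ b l, 1 ≤ φ b l := by
    intro b l; rw [hφ]; omega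
  have φub : ∀ b l, 1 ≤ b → b ≤ n → φ b l ≤ p ^ j (b - 1) := by
    intro b l h1 h2
    rw [hφ]
    have := sumlt (n - b) b l h1 (by omega)
    omega
  have Φtrunc : ∀ b l, 1 ≤ b → b ≤ n → φ 1 l ≡ φ b l [MOD p ^ j (b - 1)] := by
    intro b l h1 h2
    have hsplit : φ 1 l = φ b l + ∑ t ∈ Finset.Ico 1 b, p ^ j t * f t l := by
      rw [hφ, hφ, ← Finset.sum_Ico_consecutive _ h1 h2]
      ring
    have hdvd : p ^ j (b - 1) ∣ ∑ t ∈ Finset.Ico 1 b, p ^ j t * f t l := by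
      refine Finset.dvd_sum fun t ht => ?_
      obtain ⟨ht1, ht2⟩ := Finset.mem_Ico.mp ht
      exact Dvd.dvd.mul_right (pow_dvd_pow p (jmono t (b - 1) (by omega) (by omega))) _
    rw [hsplit]
    have h0 : (∑ t ∈ Finset.Ico 1 b, p ^ j t * f t l) ≡ 0 [MOD p ^ j (b - 1)] :=
      (Nat.modEq_zero_iff_dvd).mpr hdvd
    simpa using (Nat.ModEq.add_left (φ b l) h0)
  -- ψ and its action
  have hpsi : ∀ (a : ℕ) (x : ZMod (p ^ k)),
      ((Equiv.addRight (1 : ZMod (p ^ k))) ^ a) x = x + (a : ZMod (p ^ k)) := by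
    intro a
    induction a with
    | zero => intro x; simp
    | succ m ih =>
      intro x
      rw [pow_succ, Equiv.Perm.mul_apply, Equiv.coe_addRight, ih (x + 1)]
      push_cast
      ring
  have hvadd : ∀ (x : ZMod (p ^ k)) (a : ℕ),
      (x + (a : ZMod (p ^ k))).val ≡ x.val + a [MOD p ^ k] := by
    intro x a
    rw [ZMod.val_add, ZMod.val_natCast]
    exact (Nat.mod_modEq _ _).trans (Nat.ModEq.add_left _ (Nat.mod_modEq _ _))
  -- the key computation
  have key : ∀ x y : ZMod (p ^ k),
      φ 1 x.val + φ 1 ((y + ((φ 1 x.val : ℕ) : ZMod (p ^ k))).val) = 2 + Q y.val x.val := by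
    intro x y
    have h1 : φ 1 ((y + ((φ 1 x.val : ℕ) : ZMod (p ^ k))).val) = φ 1 (y.val + φ 1 x.val) :=
      Φcong _ _ (hvadd y (φ 1 x.val))
    have hdecomp : y.val + φ 1 x.val = K y.val x.val + p ^ j 1 * f 1 x.val := by
      rw [hφ, hK, Finset.sum_eq_sum_Ico_succ_bot (show 1 < n by omega)]
      ring
    have h2 : φ 1 (y.val + φ 1 x.val) = 1 + ∑ t ∈ Finset.Ico 1 n, p ^ j t * f t (K y.val x.val) := by
      rw [hφ]
      congr 1
      refine Finset.sum_congr rfl fun t ht => ?_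
      obtain ⟨ht1, ht2⟩ := Finset.mem_Ico.mp ht
      congr 1
      refine fcong t _ _ ht1 ht2 ?_
      rw [hdecomp]
      have hd : p ^ j t ∣ p ^ j 1 * f 1 x.val :=
        Dvd.dvd.mul_right (pow_dvd_pow p (jmono 1 t ht1 (le_of_lt ht2))) _
      have h0 : (p ^ j 1 * f 1 x.val) ≡ 0 [MOD p ^ j t] := (Nat.modEq_zero_iff_dvd).mpr hd
      simpa using (Nat.ModEq.add_left (K y.val x.val) h0)
    rw [h1, h2, hφ, hQ]
    ring
  -- the cycle set condition
  have hcycl : ∀ x y z : ZMod (p ^ k),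
      ((Equiv.addRight (1 : ZMod (p ^ k))) ^
          φ 1 (((Equiv.addRight (1 : ZMod (p ^ k))) ^ φ 1 x.val) y).val)
        (((Equiv.addRight (1 : ZMod (p ^ k))) ^ φ 1 x.val) z) =
      ((Equiv.addRight (1 : ZMod (p ^ k))) ^
          φ 1 (((Equiv.addRight (1 : ZMod (p ^ k))) ^ φ 1 y.val) x).val)
        (((Equiv.addRight (1 : ZMod (p ^ k))) ^ φ 1 y.val) z) := by
    intro x y z
    simp only [hpsi]
    have hmain : ((φ 1 x.val : ℕ) : ZMod (p ^ k)) +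
        ((φ 1 ((y + ((φ 1 x.val : ℕ) : ZMod (p ^ k))).val) : ℕ) : ZMod (p ^ k)) =
        ((φ 1 y.val : ℕ) : ZMod (p ^ k)) +
        ((φ 1 ((x + ((φ 1 y.val : ℕ) : ZMod (p ^ k))).val) : ℕ) : ZMod (p ^ k)) := by
      rw [← Nat.cast_add, ← Nat.cast_add, key x y, key y x,
        ZMod.natCast_eq_natCast_iff]
      exact Nat.ModEq.add_left 2 (hsym y.val x.val)
    rw [add_assoc, add_assoc, hmain]
  set S : CycleSet (ZMod (p ^ k)) :=
    ⟨fun i => (Equiv.addRight (1 : ZMod (p ^ k))) ^ φ 1 i.val, hcycl⟩ with hSdef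
  have hσ : ∀ i, S.σ i = (Equiv.addRight (1 : ZMod (p ^ k))) ^ φ 1 i.val := fun i => rfl
  have hσap : ∀ i x, S.σ i x = x + ((φ 1 i.val : ℕ) : ZMod (p ^ k)) := by
    intro i x; rw [hσ]; exact hpsi _ x
  -- characterization of rel
  have relChar : ∀ m, m ≤ n → ∀ x y : ZMod (p ^ k),
      S.rel m x y ↔ x.val ≡ y.val [MOD p ^ j m] := by
    intro m
    induction m with
    | zero =>
      intro _ x y
      show x = y ↔ _
      rw [hj0]
      constructor
      · rintro rfl; rfl
      · intro h
        have hx := ZMod.val_lt x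
        have hy := ZMod.val_lt y
        have hval : x.val = y.val := by
          have h' : x.val % p ^ k = y.val % p ^ k := h
          rwa [Nat.mod_eq_of_lt hx, Nat.mod_eq_of_lt hy] at h'
        exact ZMod.val_injective _ hval
    | succ m ih =>
      intro hm x y
      have hmn : m < n := hm
      have ihm := ih (le_of_lt hmn)
      have hdm : p ^ j m ∣ p ^ k := by
        rw [← hj0]; exact pow_dvd_pow p (jmono 0 m (Nat.zero_le _) hmn.le)
      have stepA : S.rel (m + 1) x y ↔ φ 1 x.val ≡ φ 1 y.val [MOD p ^ j m] := by
        show (∀ z, S.rel m (S.σ x z) (S.σ y z)) ↔ _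
        constructor
        · intro h
          have h0 := (ihm _ _).mp (h 0)
          rw [hσap, hσap] at h0
          have e1 : ((0 : ZMod (p ^ k)) + ((φ 1 x.val : ℕ) : ZMod (p ^ k))).val ≡
              (0 : ZMod (p ^ k)).val + φ 1 x.val [MOD p ^ j m] :=
            Nat.ModEq.of_dvd hdm (hvadd 0 _)
          have e2 : ((0 : ZMod (p ^ k)) + ((φ 1 y.val : ℕ) : ZMod (p ^ k))).val ≡
              (0 : ZMod (p ^ k)).val + φ 1 y.val [MOD p ^ j m] :=
            Nat.ModEq.of_dvd hdm (hvadd 0 _)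
          rw [ZMod.val_zero, Nat.zero_add] at e1 e2
          exact (e1.symm.trans h0).trans e2
        · intro h z
          refine (ihm _ _).mpr ?_
          rw [hσap, hσap]
          calc (z + ((φ 1 x.val : ℕ) : ZMod (p ^ k))).val
              ≡ z.val + φ 1 x.val [MOD p ^ j m] := Nat.ModEq.of_dvd hdm (hvadd z _)
          _ ≡ z.val + φ 1 y.val [MOD p ^ j m] := Nat.ModEq.add_left _ h
          _ ≡ _ [MOD p ^ j m] := (Nat.ModEq.of_dvd hdm (hvadd z _)).symm
      have stepB : (φ 1 x.val ≡ φ 1 y.val [MOD p ^ j m]) ↔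
          x.val ≡ y.val [MOD p ^ j (m + 1)] := by
        rcases eq_or_lt_of_le hm with hEq | hlt
        · -- m + 1 = n : both sides trivial
          have hjm1 : j (m + 1) = 0 := by rw [hEq, hjn]
          have htr : ∀ l, φ 1 l ≡ 1 [MOD p ^ j m] := by
            intro l
            have := Φtrunc (m + 1) l (by omega) (by omega)
            have hφn : φ (m + 1) l = 1 := by
              rw [hφ, hEq, Finset.Ico_self, Finset.sum_empty]
              omega
            rw [hφn] at this
            simpa using this
          constructor
          · intro _
            rw [hjm1, pow_zero]
            exact Nat.modEq_one
          · intro _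
            exact (htr x.val).trans (htr y.val).symm
        · -- m + 1 < n
          have h1m : 1 ≤ m + 1 := by omega
          have hm1n : m + 1 ≤ n := le_of_lt hlt
          have hPpos : 0 < p ^ j (m + 1) := pow_pos hp.pos _
          have htr : ∀ l, φ 1 l ≡ φ (m + 1) l [MOD p ^ j m] := by
            intro l
            have := Φtrunc (m + 1) l h1m hm1n
            simpa using this
          constructor
          · intro h
            have heq : φ (m + 1) x.val = φ (m + 1) y.val := by
              have hc : φ (m + 1) x.val ≡ φ (m + 1) y.val [MOD p ^ j m] :=
                ((htr x.val).symm.trans h).trans (htr y.val)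
              have hb1 := φlb (m + 1) x.val
              have hb2 := φlb (m + 1) y.val
              have hu1 := φub (m + 1) x.val h1m hm1n
              have hu2 := φub (m + 1) y.val h1m hm1n
              have hsub : (m + 1) - 1 = m := by omega
              rw [hsub] at hu1 hu2
              have hc' : φ (m + 1) x.val - 1 ≡ φ (m + 1) y.val - 1 [MOD p ^ j m] := by
                refine Nat.ModEq.add_right_cancel' 1 ?_
                have e1 : φ (m + 1) x.val - 1 + 1 = φ (m + 1) x.val := by omega
                have e2 : φ (m + 1) y.val - 1 + 1 = φ (m + 1) y.val := by omega
                rw [e1, e2]; exact hc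
              have hlt1 : φ (m + 1) x.val - 1 < p ^ j m := by omega
              have hlt2 : φ (m + 1) y.val - 1 < p ^ j m := by omega
              have : φ (m + 1) x.val - 1 = φ (m + 1) y.val - 1 := by
                have h'' : (φ (m + 1) x.val - 1) % p ^ j m =
                    (φ (m + 1) y.val - 1) % p ^ j m := hc'
                rwa [Nat.mod_eq_of_lt hlt1, Nat.mod_eq_of_lt hlt2] at h''
              omega
            -- use injectivity
            have e1 : φ (m + 1) (x.val % p ^ j (m + 1)) = φ (m + 1) x.val :=
              φcong (m + 1) _ _ h1m hm1n (Nat.mod_modEq _ _)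
            have e2 : φ (m + 1) (y.val % p ^ j (m + 1)) = φ (m + 1) y.val :=
              φcong (m + 1) _ _ h1m hm1n (Nat.mod_modEq _ _)
            have := hφinj (m + 1) h1m hlt (x.val % p ^ j (m + 1)) (y.val % p ^ j (m + 1))
              (Nat.mod_lt _ hPpos) (Nat.mod_lt _ hPpos) (by rw [e1, e2, heq])
            exact this
          · intro h
            have heq : φ (m + 1) x.val = φ (m + 1) y.val :=
              φcong (m + 1) _ _ h1m hm1n h
            exact ((htr x.val).trans (by rw [heq])).trans (htr y.val).symm
      rw [stepA, stepB]
  -- ψ ∈ permGroup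
  have hψmem : (Equiv.addRight (1 : ZMod (p ^ k))) ∈ S.permGroup := by
    have hσ0 : S.σ 0 = Equiv.addRight (1 : ZMod (p ^ k)) := by
      rw [hσ]
      have hv0 : (0 : ZMod (p ^ k)).val = 0 := ZMod.val_zero
      have hφ0 : φ 1 (0 : ZMod (p ^ k)).val = 1 := by
        rw [hv0, hφ]
        have : ∑ t ∈ Finset.Ico 1 n, p ^ j t * f t 0 = 0 :=
          Finset.sum_eq_zero fun t ht => by
            obtain ⟨h1, h2⟩ := Finset.mem_Ico.mp ht
            rw [hf0 t h1 h2, mul_zero]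
        rw [this]
      rw [hφ0, pow_one]
    rw [← hσ0]
    exact Subgroup.subset_closure (Set.mem_range_self 0)
  have hPG : S.permGroup = Subgroup.zpowers (Equiv.addRight (1 : ZMod (p ^ k))) := by
    apply le_antisymm
    · refine (Subgroup.closure_le _).mpr ?_
      rintro g ⟨i, rfl⟩
      exact hσ i ▸ Subgroup.pow_mem _ (Subgroup.mem_zpowers _) _
    · exact Subgroup.zpowers_le.mpr hψmem
  have hTrans : S.Transitive := by
    intro x y
    refine ⟨(Equiv.addRight (1 : ZMod (p ^ k))) ^ (y - x).val,
      Subgroup.pow_mem _ hψmem _, ?_⟩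
    rw [hpsi, ZMod.natCast_val, ZMod.cast_id]
    ring
  have hLevel : S.MultipermLevel n := by
    constructor
    · intro x y
      refine (relChar n le_rfl x y).mpr ?_
      rw [hjn, pow_zero]
      exact Nat.modEq_one
    · intro m hmn hall
      have h01 := (relChar m hmn.le 0 1).mp (hall 0 1)
      rw [ZMod.val_zero, ZMod.val_one] at h01
      have hjm : 1 ≤ j m := jpos m hmn
      have h2 : 2 ≤ p ^ j m := le_trans hp2 (Nat.le_self_pow (by omega) p)
      have h01' : 0 % p ^ j m = 1 % p ^ j m := h01
      rw [Nat.zero_mod, Nat.mod_eq_of_lt (by omega)] at h01'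
      omega
  have hCard : ∀ i, i ≤ n → S.retCard i = p ^ j i := by
    intro i hin
    haveI : NeZero (p ^ j i) := ⟨(pow_pos hp.pos _).ne'⟩
    have hPpos : 0 < p ^ j i := pow_pos hp.pos _
    have hle : p ^ j i ≤ p ^ k := Nat.pow_le_pow_right hp.pos (jlek i hin)
    have e : Quot (S.rel i) ≃ ZMod (p ^ j i) :=
      { toFun := Quot.lift (fun x => ((x.val : ℕ) : ZMod (p ^ j i))) (by
          intro x y h
          exact (ZMod.natCast_eq_natCast_iff _ _ _).mpr ((relChar i hin x y).mp h))
        invFun := fun m => Quot.mk _ ((m.val : ℕ) : ZMod (p ^ k))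
        left_inv := by
          intro q
          induction q using Quot.ind with
          | _ x =>
            refine Quot.sound ?_
            refine (relChar i hin _ _).mpr ?_
            rw [ZMod.val_natCast, ZMod.val_natCast]
            rw [Nat.mod_eq_of_lt (lt_of_lt_of_le (Nat.mod_lt _ hPpos) hle)]
            exact Nat.mod_modEq _ _
        right_inv := by
          intro m
          show (((((m.val : ℕ) : ZMod (p ^ k)).val : ℕ)) : ZMod (p ^ j i)) = m
          rw [ZMod.val_natCast,
            Nat.mod_eq_of_lt (lt_of_lt_of_le (ZMod.val_lt m) hle),
            ZMod.natCast_val, ZMod.cast_id] }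
    rw [CycleSet.retCard, Nat.card_congr e, Nat.card_zmod]
  exact ⟨S, fun i => rfl, hTrans, hLevel, hPG, hCard⟩
end
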